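/- arXiv:1901.00364 — 8 statements merged into one kernel-verified Lean document; each statement's English description precedes it below -/
import Mathlib

section
/- Let DL be the gauge algebroid of a line bundle L, with its tautological representation on L, Lie derivative ℒ_Δ and differential d_{DL}. Define on Γ(DL ⊕ J¹L) the bracket [(Δ,α),(∇,β)] = ([Δ,∇], ℒ_Δ β − i_∇ d_{DL} α), the pairing ⟨(Δ,α),(∇,β)⟩ = α(∇) + β(Δ), and the anchor pr₁. Then this bracket satisfies the Leibniz-Jacobi identity [e₁,[e₂,e₃]] = [[e₁,e₂],e₃] + [e₂,[e₁,e₃]]. -/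
/-- An abstract model of the Atiyah (der) complex `Ω^•(DL, L)` of a line bundle `L`,
with the Lie algebra `DL` of derivations, de Rham-type differential `d`, contractions
`ι` and Lie derivatives `lie`, satisfying the usual Cartan calculus identities. -/
structure CartanCalculus (DL : Type) [LieRing DL]
    (Ω : ℕ → Type) [∀ n, AddCommGroup (Ω n)] [∀ n, Module ℝ (Ω n)] where
  d : ∀ n, Ω n →ₗ[ℝ] Ω (n+1)
  ι : DL → ∀ n, Ω (n+1) →ₗ[ℝ] Ω n
  lie : DL → ∀ n, Ω n →ₗ[ℝ] Ω n
  d_d : ∀ n (α : Ω n), d (n+1) (d n α) = 0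
  ι_ι : ∀ Δ Δ' n (α : Ω (n+2)), ι Δ n (ι Δ' (n+1) α) = - ι Δ' n (ι Δ (n+1) α)
  ι_addD : ∀ Δ Δ' n (α : Ω (n+1)), ι (Δ + Δ') n α = ι Δ n α + ι Δ' n α
  ι_zeroD : ∀ n (α : Ω (n+1)), ι (0 : DL) n α = 0
  lie_deg_zero : ∀ Δ (s : Ω 0), lie Δ 0 s = ι Δ 0 (d 0 s)
  cartan : ∀ Δ n (α : Ω (n+1)), lie Δ (n+1) α = ι Δ (n+1) (d (n+1) α) + d n (ι Δ n α)
  lie_d : ∀ Δ n (α : Ω n), lie Δ (n+1) (d n α) = d n (lie Δ n α)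
  ι_bracket : ∀ Δ Δ' n (α : Ω (n+1)), ι ⁅Δ, Δ'⁆ n α = lie Δ n (ι Δ' n α) - ι Δ' n (lie Δ (n+1) α)
  lie_bracket : ∀ Δ Δ' n (α : Ω n), lie ⁅Δ, Δ'⁆ n α = lie Δ n (lie Δ' n α) - lie Δ' n (lie Δ n α)
  lie_zeroD : ∀ n (α : Ω n), lie (0 : DL) n α = 0

/-- The Dorfman–Jacobi bracket on `Γ(𝔻L) = Γ(DL ⊕ J¹L)`:
`[(Δ,α),(∇,β)] = ([Δ,∇], ℒ_Δ β − i_∇ d_{DL} α)`. -/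
def dorfmanBracket {DL : Type} [LieRing DL] {Ω : ℕ → Type}
    [∀ n, AddCommGroup (Ω n)] [∀ n, Module ℝ (Ω n)]
    (C : CartanCalculus DL Ω) (e e' : DL × Ω 1) : DL × Ω 1 :=
  (⁅e.1, e'.1⁆, C.lie e.1 1 e'.2 - C.ι e'.1 1 (C.d 1 e.2))

/-- the Dorfman–Jacobi bracket on `Γ(DL ⊕ J¹L)` satisfies the
Leibniz–Jacobi identity `[e₁,[e₂,e₃]] = [[e₁,e₂],e₃] + [e₂,[e₁,e₃]]`. -/
theorem dorfmanBracket_leibniz_jacobi (DL : Type) [LieRing DL] (Ω : ℕ → Type)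
    [∀ n, AddCommGroup (Ω n)] [∀ n, Module ℝ (Ω n)]
    (C : CartanCalculus DL Ω) :
    ∀ e₁ e₂ e₃ : DL × Ω 1,
      dorfmanBracket C e₁ (dorfmanBracket C e₂ e₃)
        = dorfmanBracket C (dorfmanBracket C e₁ e₂) e₃
          + dorfmanBracket C e₂ (dorfmanBracket C e₁ e₃) := by
  rintro ⟨Δ₁, α₁⟩ ⟨Δ₂, α₂⟩ ⟨Δ₃, α₃⟩
  refine Prod.ext (leibniz_lie _ _ _) ?_
  simp only [dorfmanBracket, Prod.snd_add, map_sub, C.ι_bracket, C.lie_bracket, C.lie_d]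
  have h : C.d 1 (C.lie Δ₂ 1 α₁) = C.d 1 (C.ι Δ₂ 1 (C.d 1 α₁)) := by
    rw [C.cartan Δ₂ 0 α₁, map_add, C.d_d, add_zero]
  have h' : C.d 1 (C.lie Δ₁ 1 α₂) = C.d 1 (C.ι Δ₁ 1 (C.d 1 α₂)) := by
    rw [C.cartan Δ₁ 0 α₂, map_add, C.d_d, add_zero]
  rw [h, h']
  abel
end

section
/- Let ω ∈ Ω³(DL,L) be a closed Atiyah 3-form on a line bundle L. Then the ω-twisted bracket [(Δ,α),(∇,β)]_ω = ([Δ,∇], ℒ_Δ β − i_∇ d_{DL} α − i_∇ i_Δ ω) on Γ(DL ⊕ J¹L), together with the pairing ⟨(Δ,α),(∇,β)⟩ = α(∇) + β(Δ) and anchor pr₁, satisfies the Leibniz-Jacobi identity [e₁,[e₂,e₃]]_ω = [[e₁,e₂]_ω,e₃]_ω + [e₂,[e₁,e₃]_ω]_ω. -/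
/-- The `ω`-twisted Dorfman–Jacobi bracket on `Γ(𝔻L)`:
`[(Δ,α),(∇,β)]_ω = ([Δ,∇], ℒ_Δ β − i_∇ d_{DL} α − i_∇ i_Δ ω)`. -/
def twistedDorfmanBracket {DL : Type} [LieRing DL] {Ω : ℕ → Type}
    [∀ n, AddCommGroup (Ω n)] [∀ n, Module ℝ (Ω n)]
    (C : CartanCalculus DL Ω) (ω : Ω 3) (e e' : DL × Ω 1) : DL × Ω 1 :=
  (⁅e.1, e'.1⁆, C.lie e.1 1 e'.2 - C.ι e'.1 1 (C.d 1 e.2) - C.ι e'.1 1 (C.ι e.1 2 ω))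

set_option maxHeartbeats 1000000 in
/-- for a closed Atiyah 3-form `ω`, the `ω`-twisted bracket on
`Γ(DL ⊕ J¹L)` satisfies the Leibniz–Jacobi identity. -/
theorem twistedDorfmanBracket_leibniz_jacobi (DL : Type) [LieRing DL] (Ω : ℕ → Type)
    [∀ n, AddCommGroup (Ω n)] [∀ n, Module ℝ (Ω n)]
    (C : CartanCalculus DL Ω) (ω : Ω 3) (hω : C.d 3 ω = 0) :
    ∀ e₁ e₂ e₃ : DL × Ω 1,
      twistedDorfmanBracket C ω e₁ (twistedDorfmanBracket C ω e₂ e₃)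
        = twistedDorfmanBracket C ω (twistedDorfmanBracket C ω e₁ e₂) e₃
          + twistedDorfmanBracket C ω e₂ (twistedDorfmanBracket C ω e₁ e₃) := by
  rintro ⟨Δ₁, α₁⟩ ⟨Δ₂, α₂⟩ ⟨Δ₃, α₃⟩
  ext
  · exact leibniz_lie Δ₁ Δ₂ Δ₃
  · simp only [twistedDorfmanBracket, Prod.snd_add]
    simp only [C.ι_bracket, C.lie_bracket]
    simp only [map_sub, map_add]
    simp only [C.lie_d]
    simp only [C.cartan]
    simp only [C.d_d, hω, map_zero, zero_add, add_zero, map_sub, map_add]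
    abel
end

section
/- Let ξ ⊂ (𝔻L)^p be isotropic and involutive. If α, β are Hamiltonian Atiyah (p−1)-forms with Hamiltonian derivations Δ_α, Δ_β (i.e. (Δ_α, d_{DL}α), (Δ_β, d_{DL}β) ∈ Γξ), then {α,β} := i_{Δ_α} d_{DL} β is again Hamiltonian with Hamiltonian derivation [Δ_α, Δ_β], i.e. ([Δ_α,Δ_β], d_{DL}{α,β}) ∈ Γξ. -/
section
variable {DL : Type} [LieRing DL] {Ω : ℕ → Type}
  [∀ n, AddCommGroup (Ω n)] [∀ n, Module ℝ (Ω n)]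

/-- Higher Dorfman–Jacobi bracket on `Γ((𝔻L)^p)` (form parts modelled by `Ω (q+1)`,
`p = q+1`). -/
def higherDorfman (C : CartanCalculus DL Ω) (q : ℕ) (e e' : DL × Ω (q+1)) : DL × Ω (q+1) :=
  (⁅e.1, e'.1⁆, C.lie e.1 (q+1) e'.2 - C.ι e'.1 (q+1) (C.d (q+1) e.2))

/-- Pairing `⟨(Δ,α),(∇,β)⟩ = i_Δ β + i_∇ α`. -/
def higherPairing (C : CartanCalculus DL Ω) (q : ℕ) (e e' : DL × Ω (q+1)) : Ω q :=
  C.ι e.1 q e'.2 + C.ι e'.1 q e.2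

end

/-- if `ξ ⊂ (𝔻L)^p` is isotropic and involutive and `α, β` are
Hamiltonian `(p−1)`-forms (here elements of `Ω q`, with `(Δ_α, d α), (Δ_β, d β) ∈ ξ`),
then `{α,β} = i_{Δ_α} d β` is Hamiltonian with Hamiltonian derivation `[Δ_α, Δ_β]`,
i.e. `([Δ_α,Δ_β], d{α,β}) ∈ ξ`. -/
theorem hamiltonian_bracket_hamiltonian (DL : Type) [LieRing DL] [Module ℝ DL]
    (Ω : ℕ → Type) [∀ n, AddCommGroup (Ω n)] [∀ n, Module ℝ (Ω n)]
    (C : CartanCalculus DL Ω) (q : ℕ) (ξ : Submodule ℝ (DL × Ω (q+1)))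
    (hiso : ∀ e ∈ ξ, ∀ e' ∈ ξ, higherPairing C q e e' = 0)
    (hinv : ∀ e ∈ ξ, ∀ e' ∈ ξ, higherDorfman C q e e' ∈ ξ)
    (α β : Ω q) (Δα Δβ : DL)
    (hα : ((Δα, C.d q α) : DL × Ω (q+1)) ∈ ξ)
    (hβ : ((Δβ, C.d q β) : DL × Ω (q+1)) ∈ ξ) :
    ((⁅Δα, Δβ⁆, C.d q (C.ι Δα q (C.d q β))) : DL × Ω (q+1)) ∈ ξ := by
  have h := hinv _ hα _ hβ
  have key : C.d q (C.ι Δα q (C.d q β)) = C.lie Δα (q+1) (C.d q β) := by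
    rw [C.lie_d]
    cases q with
    | zero => rw [C.lie_deg_zero]
    | succ n =>
      rw [C.cartan, map_add, C.d_d]
      simp
  rw [key]
  have : higherDorfman C q (Δα, C.d q α) (Δβ, C.d q β)
      = (⁅Δα, Δβ⁆, C.lie Δα (q+1) (C.d q β)) := by
    simp only [higherDorfman, C.d_d, map_zero, sub_zero]
  rwa [this] at h
end

section
/- (Lemma 5.4) Let ξ ⊂ (𝔻L)^p be isotropic and involutive. For n ≥ 3 and Hamiltonian (p−1)-forms α₁,…,α_n with Hamiltonian derivations Δ_{α_i}, one has (−1)^{n+1} d_{DL}( i_{Δ_{α_n}} ⋯ i_{Δ_{α_3}} {α₁,α₂} ) = Σ_{2≤i<j≤n} (−1)^{i+j−1} i_{Δ_{α_n}} ⋯ \widehat{i_{Δ_{α_j}}} ⋯ \widehat{i_{Δ_{α_i}}} ⋯ i_{Δ_{α_2}} {{α_i,α_j}, α₁} + Σ_{3≤j≤n} (−1)^j i_{Δ_{α_n}} ⋯ \widehat{i_{Δ_{α_j}}} ⋯ i_{Δ_{α_3}} {{α₁,α_j}, α₂} + i_{Δ_{α_n}} ⋯ i_{Δ_{α_4}}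 {{α₁,α₂}, α₃}, where hats denote omitted contractions. -/
/-- An (ungraded) abstract model of the Atiyah complex `Ω^•(DL,L)` of a line bundle,
collecting all Atiyah forms in a single `ℝ`-module `Ω` with differential `d`,
contractions `ι` and Lie derivatives `lie` along the Lie algebra `DL` of
derivations, satisfying the Cartan calculus identities. -/
structure CartanCalcU (DL : Type) [LieRing DL] (Ω : Type)
    [AddCommGroup Ω] [Module ℝ Ω] where
  d : Ω →ₗ[ℝ] Ω
  ι : DL → Ω →ₗ[ℝ] Ω
  lie : DL → Ω →ₗ[ℝ] Ω
  d_d : ∀ α, d (d α) = 0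
  ι_ι : ∀ Δ Δ' α, ι Δ (ι Δ' α) = - ι Δ' (ι Δ α)
  ι_addD : ∀ Δ Δ' α, ι (Δ + Δ') α = ι Δ α + ι Δ' α
  ι_zeroD : ∀ α, ι (0 : DL) α = 0
  cartan : ∀ Δ α, lie Δ α = ι Δ (d α) + d (ι Δ α)
  lie_d : ∀ Δ α, lie Δ (d α) = d (lie Δ α)
  ι_bracket : ∀ Δ Δ' α, ι ⁅Δ, Δ'⁆ α = lie Δ (ι Δ' α) - ι Δ' (lie Δ α)
  lie_bracket : ∀ Δ Δ' α, lie ⁅Δ, Δ'⁆ α = lie Δ (lie Δ' α) - lie Δ' (lie Δ α)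

/-- Iterated contraction `i_{Δ_{k_m}} ⋯ i_{Δ_{k_1}} w` along the (1-based) index
list `[k_1, …, k_m]` (applied innermost first, so the last index is outermost). -/
def ctr {DL : Type} [LieRing DL] {Ω : Type} [AddCommGroup Ω] [Module ℝ Ω]
    (C : CartanCalcU DL Ω) (Δ : ℕ → DL) (l : List ℕ) (w : Ω) : Ω :=
  l.foldl (fun w k => C.ι (Δ k) w) w

namespace CC54
variable {DL : Type} [LieRing DL] {Ω : Type} [AddCommGroup Ω] [Module ℝ Ω]
  (C : CartanCalcU DL Ω)

def ctrD (L : List DL) (w : Ω) : Ω := L.foldl (fun w x => C.ι x w) w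

lemma ctr_eq (Δ : ℕ → DL) (l : List ℕ) (w : Ω) :
    ctr C Δ l w = ctrD C (l.map Δ) w := by
  unfold ctr ctrD
  rw [List.foldl_map]

@[simp] lemma ctrD_nil (w : Ω) : ctrD C ([] : List DL) w = w := rfl

@[simp] lemma ctrD_cons (x : DL) (L : List DL) (w : Ω) :
    ctrD C (x :: L) w = ctrD C L (C.ι x w) := rfl

lemma ctrD_append_singleton (L : List DL) (x : DL) (w : Ω) :
    ctrD C (L ++ [x]) w = C.ι x (ctrD C L w) := by
  unfold ctrD; rw [List.foldl_append]; rfl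

lemma ctrD_add (L : List DL) (w w' : Ω) :
    ctrD C L (w + w') = ctrD C L w + ctrD C L w' := by
  induction L generalizing w w' with
  | nil => rfl
  | cons x L ih => simp [ctrD_cons, map_add, ih]

lemma ctrD_smul (L : List DL) (c : ℝ) (w : Ω) :
    ctrD C L (c • w) = c • ctrD C L w := by
  induction L generalizing w with
  | nil => rfl
  | cons x L ih => simp [ctrD_cons, map_smul, ih]

lemma ctrD_neg (L : List DL) (w : Ω) : ctrD C L (-w) = - ctrD C L w := by
  induction L generalizing w with
  | nil => rfl
  | cons x L ih => simp [ctrD_cons, map_neg, ih]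

lemma ι_negD (x : DL) (w : Ω) : C.ι (-x) w = - C.ι x w := by
  have h := C.ι_addD x (-x) w
  simp only [add_neg_cancel, C.ι_zeroD] at h
  exact eq_neg_of_add_eq_zero_right h.symm

lemma ctrD_set (L : List DL) (t : ℕ) (B : DL) (w : Ω) (ht : t < L.length) :
    ctrD C (L.set t B) w = ((-1 : ℝ)^t) • ctrD C (L.eraseIdx t) (C.ι B w) := by
  induction L generalizing t w with
  | nil => simp at ht
  | cons x L ih =>
    cases t with
    | zero => simp [ctrD_cons]
    | succ t =>
      simp only [List.set, List.eraseIdx, ctrD_cons]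
      rw [ih t (C.ι x w) (by simpa using ht)]
      have : C.ι B (C.ι x w) = (-1 : ℝ) • C.ι x (C.ι B w) := by
        rw [C.ι_ι]; module
      rw [this, ctrD_smul, smul_smul, pow_succ]

lemma lie_ι (q x : DL) (w : Ω) :
    C.lie q (C.ι x w) = C.ι ⁅q, x⁆ w + C.ι x (C.lie q w) := by
  have h := C.ι_bracket q x w
  rw [h]; abel

lemma lie_ctrD (q : DL) (Δ : ℕ → DL) :
    ∀ (m a : ℕ) (w : Ω),
    C.lie q (ctrD C ((List.range' a m).map Δ) w)
      = (∑ t ∈ Finset.range m,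
          ctrD C (((List.range' a m).map Δ).set t ⁅q, Δ (a + t)⁆) w)
        + ctrD C ((List.range' a m).map Δ) (C.lie q w) := by
  intro m
  induction m with
  | zero => simp
  | succ m ih =>
    intro a w
    simp only [List.range'_succ, List.map_cons, ctrD_cons]
    rw [ih (a+1) (C.ι (Δ a) w), Finset.sum_range_succ']
    have hs : ∀ t, ctrD C ((Δ a :: (List.range' (a+1) m).map Δ).set (t+1) ⁅q, Δ (a + (t+1))⁆) w
        = ctrD C (((List.range' (a+1) m).map Δ).set t ⁅q, Δ (a + 1 + t)⁆) (C.ι (Δ a) w) := by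
      intro t
      have h : a + (t+1) = a + 1 + t := by omega
      rw [h]
      rfl
    have h0 : ctrD C ((Δ a :: (List.range' (a+1) m).map Δ).set 0 ⁅q, Δ (a + 0)⁆) w
        = ctrD C ((List.range' (a+1) m).map Δ) (C.ι ⁅q, Δ a⁆ w) := rfl
    rw [Finset.sum_congr rfl (fun t _ => hs t), h0]
    have hlie : ctrD C ((List.range' (a+1) m).map Δ) (C.ι (Δ a) (C.lie q w))
        = ctrD C ((List.range' (a+1) m).map Δ) (C.lie q (C.ι (Δ a) w))
          - ctrD C ((List.range' (a+1) m).map Δ) (C.ι ⁅q, Δ a⁆ w) := by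
      rw [lie_ι C q (Δ a) w, ctrD_add]; abel
    rw [hlie]
    abel

lemma filter_range'_eraseIdx :
    ∀ (m a t : ℕ), t < m →
    (List.range' a m).filter (fun k => k ≠ a + t) = (List.range' a m).eraseIdx t := by
  intro m
  induction m with
  | zero => intro a t ht; omega
  | succ m ih =>
    intro a t ht
    rw [List.range'_succ]
    cases t with
    | zero =>
      simp only [List.eraseIdx, List.filter_cons]
      have : (a ≠ a + 0) = False := by simp
      simp only [Nat.add_zero, decide_eq_true_eq]
      rw [if_neg (by simp)]
      rw [List.filter_eq_self.2]
      intro x hx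
      have := List.mem_range'_1.1 hx
      simp only [decide_eq_true_eq]
      omega
    | succ t =>
      simp only [List.eraseIdx, List.filter_cons]
      rw [if_pos (by simp only [decide_eq_true_eq]; omega)]
      have h : a + (t + 1) = (a + 1) + t := by omega
      rw [h, ih (a+1) t (by omega)]

omit [LieRing DL] [AddCommGroup Ω] [Module ℝ Ω] in
lemma map_eraseIdx (f : ℕ → DL) : ∀ (l : List ℕ) (t : ℕ),
    (l.eraseIdx t).map f = (l.map f).eraseIdx t := by
  intro l
  induction l with
  | nil => intro t; simp
  | cons x l ih => intro t; cases t <;> simp [List.eraseIdx, ih]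

lemma neg_one_pow_congr {a b : ℕ} (h : a % 2 = b % 2) : ((-1 : ℝ))^a = (-1)^b := by
  conv_lhs => rw [← Nat.div_add_mod a 2]
  conv_rhs => rw [← Nat.div_add_mod b 2]
  rw [pow_add, pow_add, pow_mul, pow_mul, h]
  norm_num

section Xi
variable [Module ℝ DL] (ξ : Submodule ℝ (DL × Ω))
  (hiso : ∀ e ∈ ξ, ∀ e' ∈ ξ, C.ι e.1 e'.2 + C.ι e'.1 e.2 = 0)
  (hinv : ∀ e ∈ ξ, ∀ e' ∈ ξ,
      ((⁅e.1, e'.1⁆, C.lie e.1 e'.2 - C.ι e'.1 (C.d e.2)) : DL × Ω) ∈ ξ)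

include hinv in
lemma ham2 {Di Dj : DL} {ai aj : Ω}
    (hi : ((Di, C.d ai) : DL × Ω) ∈ ξ) (hj : ((Dj, C.d aj) : DL × Ω) ∈ ξ) :
    ((⁅Di, Dj⁆, C.lie Di (C.d aj)) : DL × Ω) ∈ ξ := by
  have h := hinv _ hi _ hj
  simpa [C.d_d] using h

include hiso hinv in
lemma F4 {Di Dj Dk : DL} {ai aj ak : Ω}
    (hi : ((Di, C.d ai) : DL × Ω) ∈ ξ) (hj : ((Dj, C.d aj) : DL × Ω) ∈ ξ)
    (hk : ((Dk, C.d ak) : DL × Ω) ∈ ξ) :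
    C.ι Dk (C.lie Di (C.d aj)) = - C.ι ⁅Di, Dj⁆ (C.d ak) := by
  have h := hiso _ (ham2 C ξ hinv hi hj) _ hk
  simp only at h
  exact eq_neg_of_add_eq_zero_right h

include hiso hinv in
lemma lieB {D1 D2 Dq : DL} {a1 a2 aq : Ω}
    (h1 : ((D1, C.d a1) : DL × Ω) ∈ ξ) (h2 : ((D2, C.d a2) : DL × Ω) ∈ ξ)
    (hq : ((Dq, C.d aq) : DL × Ω) ∈ ξ) :
    C.lie Dq (C.ι D1 (C.d a2))
      = - C.ι ⁅D1, Dq⁆ (C.d a2) + C.ι ⁅D2, Dq⁆ (C.d a1) := by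
  rw [lie_ι, F4 C ξ hiso hinv hq h2 h1]
  rw [show ⁅Dq, D1⁆ = -⁅D1, Dq⁆ from (lie_skew Dq D1).symm,
      show ⁅Dq, D2⁆ = -⁅D2, Dq⁆ from (lie_skew Dq D2).symm,
      ι_negD, ι_negD]
  abel

include hiso hinv in
lemma BB {D1 D2 Dq Dt : DL} {a1 a2 aq at' : Ω}
    (h1 : ((D1, C.d a1) : DL × Ω) ∈ ξ) (h2 : ((D2, C.d a2) : DL × Ω) ∈ ξ)
    (hq : ((Dq, C.d aq) : DL × Ω) ∈ ξ) (ht : ((Dt, C.d at') : DL × Ω) ∈ ξ) :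
    C.ι ⁅Dq, Dt⁆ (C.ι D1 (C.d a2)) = C.ι D2 (C.ι ⁅Dq, Dt⁆ (C.d a1)) := by
  have e2 : C.ι ⁅Dq, Dt⁆ (C.d a2) = - C.ι D2 (C.lie Dq (C.d at')) := by
    rw [F4 C ξ hiso hinv hq ht h2]; abel
  have e1 : C.ι ⁅Dq, Dt⁆ (C.d a1) = - C.ι D1 (C.lie Dq (C.d at')) := by
    rw [F4 C ξ hiso hinv hq ht h1]; abel
  rw [C.ι_ι, e2, map_neg, neg_neg, C.ι_ι, e1, map_neg]

omit [Module ℝ DL] in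
lemma dB (D1 : DL) (a2 : Ω) :
    C.d (C.ι D1 (C.d a2)) = C.lie D1 (C.d a2) := by
  have h := C.cartan D1 (C.d a2)
  rw [C.d_d, map_zero] at h
  rw [h]; abel

end Xi

lemma ctr_append_singleton (Δ : ℕ → DL) (l : List ℕ) (k : ℕ) (w : Ω) :
    ctr C Δ (l ++ [k]) w = C.ι (Δ k) (ctr C Δ l w) := by
  rw [ctr_eq, List.map_append, List.map_singleton, ctrD_append_singleton, ← ctr_eq]

lemma d_ι (x : DL) (w : Ω) :
    C.d (C.ι x w) = C.lie x w - C.ι x (C.d w) := by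
  rw [C.cartan x w]; abel

end CC54

open CC54 in
/-- Lemma 5.4: for an isotropic involutive subbundle
`ξ ⊂ (𝔻L)^p` and Hamiltonian forms `α₁,…,α_n` (`n ≥ 3`) with Hamiltonian
derivations `Δ_{α_i}`, with `{α,β} = i_{Δ_α} d β`:
`(−1)^{n+1} d(i_{Δ_{α_n}}⋯i_{Δ_{α_3}}{α₁,α₂})
  = Σ_{2≤i<j≤n} (−1)^{i+j−1} i_{Δ_{α_n}}⋯î_j⋯î_i⋯i_{Δ_{α_2}} {{α_i,α_j},α₁}
  + Σ_{3≤j≤n} (−1)^j i_{Δ_{α_n}}⋯î_j⋯i_{Δ_{α_3}} {{α₁,α_j},α₂}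
  + i_{Δ_{α_n}}⋯i_{Δ_{α_4}} {{α₁,α₂},α₃}`. -/
theorem lemma_5_4 (DL : Type) [LieRing DL] [Module ℝ DL]
    (Ω : Type) [AddCommGroup Ω] [Module ℝ Ω]
    (C : CartanCalcU DL Ω) (ξ : Submodule ℝ (DL × Ω))
    (hiso : ∀ e ∈ ξ, ∀ e' ∈ ξ, C.ι e.1 e'.2 + C.ι e'.1 e.2 = 0)
    (hinv : ∀ e ∈ ξ, ∀ e' ∈ ξ,
      ((⁅e.1, e'.1⁆, C.lie e.1 e'.2 - C.ι e'.1 (C.d e.2)) : DL × Ω) ∈ ξ)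
    (n : ℕ) (hn : 3 ≤ n) (α : ℕ → Ω) (Δ : ℕ → DL)
    (hham : ∀ k ∈ Finset.Icc 1 n, ((Δ k, C.d (α k)) : DL × Ω) ∈ ξ) :
    ((-1 : ℝ)^(n+1)) • C.d (ctr C Δ (List.range' 3 (n-2)) (C.ι (Δ 1) (C.d (α 2))))
      = (∑ i ∈ Finset.Icc 2 n, ∑ j ∈ Finset.Icc (i+1) n,
          ((-1 : ℝ)^(i+j-1)) •
            ctr C Δ ((List.range' 2 (n-1)).filter (fun k => k ≠ i ∧ k ≠ j))
              (C.ι ⁅Δ i, Δ j⁆ (C.d (α 1))))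
        + (∑ j ∈ Finset.Icc 3 n,
          ((-1 : ℝ)^j) •
            ctr C Δ ((List.range' 3 (n-2)).filter (fun k => k ≠ j))
              (C.ι ⁅Δ 1, Δ j⁆ (C.d (α 2))))
        + ctr C Δ (List.range' 4 (n-3)) (C.ι ⁅Δ 1, Δ 2⁆ (C.d (α 3))) := by
  revert hham
  induction n, hn using Nat.le_induction with
  | base =>
    intro hham
    have h1 : ((Δ 1, C.d (α 1)) : DL × Ω) ∈ ξ := hham 1 (by decide)
    have h2 : ((Δ 2, C.d (α 2)) : DL × Ω) ∈ ξ := hham 2 (by decide)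
    have h3 : ((Δ 3, C.d (α 3)) : DL × Ω) ∈ ξ := hham 3 (by decide)
    have hβ : C.d (C.ι (Δ 3) (C.ι (Δ 1) (C.d (α 2))))
        = C.lie (Δ 3) (C.ι (Δ 1) (C.d (α 2)))
          - C.ι (Δ 3) (C.lie (Δ 1) (C.d (α 2))) := by
      rw [d_ι, dB]
    have h34 : C.ι (Δ 3) (C.lie (Δ 1) (C.d (α 2)))
        = - C.ι ⁅Δ 1, Δ 2⁆ (C.d (α 3)) := F4 C ξ hiso hinv h1 h2 h3
    have hl := lieB C ξ hiso hinv h1 h2 h3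
    have hIcc23 : Finset.Icc 2 3 = {2, 3} := by decide
    have hIcc33 : Finset.Icc 3 3 = {3} := by decide
    have hIcc43 : Finset.Icc (3+1) 3 = ∅ := by decide
    simp only [show (3:ℕ)-2 = 1 from rfl, show (3:ℕ)-1 = 2 from rfl,
      show (3:ℕ)-3 = 0 from rfl, hIcc23, hIcc33, hIcc43]
    simp only [show List.range' 3 1 = [3] from rfl, show List.range' 2 2 = [2,3] from rfl,
      show List.range' 4 0 = [] from rfl]
    rw [Finset.sum_insert (by decide)]
    simp only [show (2:ℕ)+1 = 3 from rfl, show (3:ℕ)+1 = 4 from rfl, hIcc33, hIcc43,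
      Finset.sum_singleton, Finset.sum_empty]
    simp only [ctr, List.foldl]
    rw [hβ, h34, hl]
    norm_num
    module
  | succ n hn ih =>
    intro hham
    have hm : ∀ k, 1 ≤ k → k ≤ n+1 → ((Δ k, C.d (α k)) : DL × Ω) ∈ ξ := fun k hk1 hk2 =>
      hham k (Finset.mem_Icc.2 ⟨hk1, hk2⟩)
    have ih' := ih (fun k hk => by
      have h := Finset.mem_Icc.1 hk
      exact hm k h.1 (by omega))
    have h1 := hm 1 (by omega) (by omega)
    have h2 := hm 2 (by omega) (by omega)
    have hq := hm (n+1) (by omega) (by omega)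
    -- abbreviations
    set ω1 := C.d (α 1) with hw1
    set ω2 := C.d (α 2) with hw2
    set ω3 := C.d (α 3) with hw3
    set β := C.ι (Δ 1) ω2 with hbdef
    set X := ctr C Δ (List.range' 3 (n-2)) β with hXdef
    set T1 := ∑ i ∈ Finset.Icc 2 n, ∑ j ∈ Finset.Icc (i+1) n,
          ((-1 : ℝ)^(i+j-1)) •
            ctr C Δ ((List.range' 2 (n-1)).filter (fun k => k ≠ i ∧ k ≠ j))
              (C.ι ⁅Δ i, Δ j⁆ ω1) with hT1def
    set T2 := ∑ j ∈ Finset.Icc 3 n,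
          ((-1 : ℝ)^j) •
            ctr C Δ ((List.range' 3 (n-2)).filter (fun k => k ≠ j))
              (C.ι ⁅Δ 1, Δ j⁆ ω2) with hT2def
    set T3 := ctr C Δ (List.range' 4 (n-3)) (C.ι ⁅Δ 1, Δ 2⁆ ω3) with hT3def
    set S := ∑ i ∈ Finset.Icc 2 n,
          ((-1 : ℝ)^(i+n)) •
            ctr C Δ ((List.range' 2 (n-1)).filter (fun k => k ≠ i))
              (C.ι ⁅Δ i, Δ (n+1)⁆ ω1) with hSdef
    set g2 := ((-1 : ℝ)^(n+1)) •
            ctr C Δ (List.range' 3 (n-2)) (C.ι ⁅Δ 1, Δ (n+1)⁆ ω2) with hg2def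
    -- list splittings
    have hL1 : List.range' 3 (n+1-2) = List.range' 3 (n-2) ++ [n+1] := by
      rw [show n+1-2 = (n-2)+1 by omega, List.range'_concat]
      congr 2
      omega
    have hL2 : List.range' 2 (n+1-1) = List.range' 2 (n-1) ++ [n+1] := by
      rw [show n+1-1 = (n-1)+1 by omega, List.range'_concat]
      congr 2
      omega
    have hL3 : List.range' 4 (n+1-3) = List.range' 4 (n-3) ++ [n+1] := by
      rw [show n+1-3 = (n-3)+1 by omega, List.range'_concat]
      congr 2
      omega
    have hL4 : List.range' 2 (n-1) = 2 :: List.range' 3 (n-2) := by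
      rw [show n-1 = (n-2)+1 by omega, List.range'_succ]
    -- the key lie-derivative identity
    have hQ : ((-1 : ℝ)^n) • C.lie (Δ (n+1)) X = S + g2 := by
      have hM := lie_ctrD C (Δ (n+1)) Δ (n-2) 3 β
      have hterm : ∀ t ∈ Finset.range (n-2),
          ctrD C ((List.map Δ (List.range' 3 (n-2))).set t ⁅Δ (n+1), Δ (3+t)⁆) β
          = ((-1:ℝ)^(t+1)) •
              ctr C Δ ((List.range' 2 (n-1)).filter (fun k => k ≠ 3+t))
                (C.ι ⁅Δ (3+t), Δ (n+1)⁆ ω1) := by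
        intro t ht
        have htn : t < n-2 := Finset.mem_range.1 ht
        have h3t := hm (3+t) (by omega) (by omega)
        rw [ctrD_set C _ t _ β (by
          rw [List.length_map, List.length_range']; omega)]
        rw [← map_eraseIdx, ← filter_range'_eraseIdx (n-2) 3 t htn]
        rw [hbdef, BB C ξ hiso hinv h1 h2 hq h3t]
        rw [show C.ι ⁅Δ (n+1), Δ (3+t)⁆ ω1 = - C.ι ⁅Δ (3+t), Δ (n+1)⁆ ω1 from by
          rw [show ⁅Δ (n+1), Δ (3+t)⁆ = -⁅Δ (3+t), Δ (n+1)⁆ from (lie_skew _ _).symm,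
            ι_negD]]
        rw [map_neg, ctrD_neg]
        rw [show ctrD C (List.map Δ ((List.range' 3 (n-2)).filter (fun k => k ≠ 3+t)))
              (C.ι (Δ 2) (C.ι ⁅Δ (3+t), Δ (n+1)⁆ ω1))
            = ctr C Δ ((List.range' 2 (n-1)).filter (fun k => k ≠ 3+t))
                (C.ι ⁅Δ (3+t), Δ (n+1)⁆ ω1) from by
          rw [ctr_eq, hL4, List.filter_cons, if_pos (by simp; omega)]
          rfl]
        rw [pow_succ]
        module
      have hlieβ : ctrD C (List.map Δ (List.range' 3 (n-2))) (C.lie (Δ (n+1)) β)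
          = - ctr C Δ (List.range' 3 (n-2)) (C.ι ⁅Δ 1, Δ (n+1)⁆ ω2)
            + ctr C Δ (List.range' 3 (n-2)) (C.ι ⁅Δ 2, Δ (n+1)⁆ ω1) := by
        rw [hbdef, lieB C ξ hiso hinv h1 h2 hq, ctrD_add, ctrD_neg,
          ← ctr_eq, ← ctr_eq]
      have hS : S = (∑ t ∈ Finset.range (n-2),
            ((-1:ℝ)^(n+t+1)) •
              ctr C Δ ((List.range' 2 (n-1)).filter (fun k => k ≠ 3+t))
                (C.ι ⁅Δ (3+t), Δ (n+1)⁆ ω1))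
          + ((-1:ℝ)^n) • ctr C Δ (List.range' 3 (n-2)) (C.ι ⁅Δ 2, Δ (n+1)⁆ ω1) := by
        rw [hSdef, show Finset.Icc 2 n = Finset.Ico 2 (n+1) from rfl,
          Finset.sum_Ico_eq_sum_range, show n+1-2 = (n-2)+1 by omega,
          Finset.sum_range_succ']
        congr 1
        · apply Finset.sum_congr rfl
          intro t _
          rw [show 2+(t+1) = 3+t by omega,
            neg_one_pow_congr (a:=3+t+n) (b:=n+t+1) (by omega)]
        · rw [show (2:ℕ)+0 = 2 from rfl,
            show ((-1:ℝ))^(2+n) = (-1)^n from neg_one_pow_congr (by omega)]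
          congr 2
          rw [hL4, List.filter_cons, if_neg (by simp)]
          rw [List.filter_eq_self.2]
          intro x hx
          simp only [decide_eq_true_eq]
          have := List.mem_range'_1.1 hx
          omega
      rw [hXdef, ctr_eq, hM, Finset.sum_congr rfl hterm, hlieβ, hS, hg2def]
      rw [smul_add, Finset.smul_sum]
      rw [Finset.sum_congr rfl (fun t (_ : t ∈ Finset.range (n-2)) => by
        rw [smul_smul, ← pow_add, show n+(t+1) = n+t+1 from rfl] :
        ∀ t ∈ Finset.range (n-2), ((-1:ℝ)^n) • (((-1:ℝ)^(t+1)) •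
              ctr C Δ ((List.range' 2 (n-1)).filter (fun k => k ≠ 3+t))
                (C.ι ⁅Δ (3+t), Δ (n+1)⁆ ω1))
          = ((-1:ℝ)^(n+t+1)) •
              ctr C Δ ((List.range' 2 (n-1)).filter (fun k => k ≠ 3+t))
                (C.ι ⁅Δ (3+t), Δ (n+1)⁆ ω1))]
      rw [smul_add, smul_neg,
        show ((-1:ℝ)^n) • ctr C Δ (List.range' 3 (n-2)) (C.ι ⁅Δ 1, Δ (n+1)⁆ ω2)
            = - (((-1:ℝ)^(n+1)) • ctr C Δ (List.range' 3 (n-2)) (C.ι ⁅Δ 1, Δ (n+1)⁆ ω2)) from by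
          rw [pow_succ]; module]
      abel
    -- sum splittings
    have hT1 : (∑ i ∈ Finset.Icc 2 (n+1), ∑ j ∈ Finset.Icc (i+1) (n+1),
          ((-1 : ℝ)^(i+j-1)) •
            ctr C Δ ((List.range' 2 (n+1-1)).filter (fun k => k ≠ i ∧ k ≠ j))
              (C.ι ⁅Δ i, Δ j⁆ ω1))
        = C.ι (Δ (n+1)) T1 + S := by
      rw [Finset.sum_Icc_succ_top (show 2 ≤ n+1 by omega)]
      rw [show Finset.Icc (n+1+1) (n+1) = ∅ from Finset.Icc_eq_empty (by omega),
        Finset.sum_empty, add_zero]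
      rw [Finset.sum_congr rfl (fun i hi => Finset.sum_Icc_succ_top (by
        have := Finset.mem_Icc.1 hi; omega) _)]
      rw [Finset.sum_add_distrib]
      congr 1
      · rw [hT1def, map_sum]
        apply Finset.sum_congr rfl
        intro i hi
        rw [map_sum]
        apply Finset.sum_congr rfl
        intro j hj
        have hi' := Finset.mem_Icc.1 hi
        have hj' := Finset.mem_Icc.1 hj
        rw [map_smul]
        congr 1
        rw [hL2, List.filter_append,
          show List.filter (fun k => k ≠ i ∧ k ≠ j) [n+1] = [n+1] from by
            rw [List.filter_cons, if_pos (by simp; omega)]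
            rfl,
          ctr_append_singleton]
      · rw [hSdef]
        apply Finset.sum_congr rfl
        intro i hi
        have hi' := Finset.mem_Icc.1 hi
        rw [show i+(n+1)-1 = i+n by omega]
        congr 1
        rw [hL2, List.filter_append,
          show List.filter (fun k => k ≠ i ∧ k ≠ (n+1)) [n+1] = [] from by
            rw [List.filter_cons, if_neg (by simp)]
            rfl,
          List.append_nil]
        congr 1
        apply List.filter_congr
        intro x hx
        have hxx := List.mem_range'_1.1 hx
        simp only [decide_eq_decide]
        omega
    have hT2 : (∑ j ∈ Finset.Icc 3 (n+1),
          ((-1 : ℝ)^j) •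
            ctr C Δ ((List.range' 3 (n+1-2)).filter (fun k => k ≠ j))
              (C.ι ⁅Δ 1, Δ j⁆ ω2))
        = C.ι (Δ (n+1)) T2 + g2 := by
      rw [Finset.sum_Icc_succ_top (show 3 ≤ n+1 by omega)]
      congr 1
      · rw [hT2def, map_sum]
        apply Finset.sum_congr rfl
        intro j hj
        have hj' := Finset.mem_Icc.1 hj
        rw [map_smul]
        congr 1
        rw [hL1, List.filter_append,
          show List.filter (fun k => k ≠ j) [n+1] = [n+1] from by
            rw [List.filter_cons, if_pos (by simp; omega)]
            rfl,
          ctr_append_singleton]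
      · rw [hg2def]
        congr 2
        rw [hL1, List.filter_append,
          show List.filter (fun k => k ≠ (n+1)) [n+1] = [] from by
            rw [List.filter_cons, if_neg (by simp)]
            rfl,
          List.append_nil, List.filter_eq_self.2]
        intro x hx
        simp only [decide_eq_true_eq]
        have := List.mem_range'_1.1 hx
        omega
    have hT3 : ctr C Δ (List.range' 4 (n+1-3)) (C.ι ⁅Δ 1, Δ 2⁆ ω3)
        = C.ι (Δ (n+1)) T3 := by
      rw [hL3, ctr_append_singleton, hT3def]
    -- assemble
    rw [hT1, hT2, hT3]
    rw [hL1, ctr_append_singleton, ← hXdef, d_ι, smul_sub]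
    have hdX : C.d X = ((-1:ℝ)^(n+1)) • (T1 + T2 + T3) := by
      rw [← ih', smul_smul, ← pow_add,
        show ((-1:ℝ))^((n+1)+(n+1)) = 1 from by
          rw [neg_one_pow_congr (a:=(n+1)+(n+1)) (b:=0) (by omega)]; norm_num,
        one_smul]
    rw [hdX, map_smul, smul_smul,
      show ((-1:ℝ))^(n+1+1) * (-1)^(n+1) = -1 from by
        rw [← pow_add]
        exact (CC54.neg_one_pow_congr (by omega)).trans (pow_one _),
      show ((-1:ℝ))^(n+1+1) = (-1)^n from CC54.neg_one_pow_congr (by omega),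
      neg_one_smul, sub_neg_eq_add, hQ, map_add, map_add]
    abel
end

section
/- (Theorem 5.5) Let ξ ⊂ (𝔻L)^p be an isotropic involutive subbundle. Then the complex Γ(L) → Ω¹(DL,L) → ⋯ → Ω^{p−2}(DL,L) → Ω^{p−1}_{Ham}(DL,L) with differential l₁ = d_{DL}, together with the multibrackets l_k(α₁,…,α_k) = κ(k) · i_{Δ_{α_k}} ⋯ i_{Δ_{α_3}} {α₁,α₂} for 2 ≤ k ≤ p+1 (nonzero only when all arguments are in degree 0), where κ(k) = (−1)^{k/2+1} for k even and (−1)^{(k−1)/2} for k odd, forms a p-term L∞-algebra. -/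
/-- The sign `κ(k)`: `(−1)^{k/2+1}` for even `k` and `(−1)^{(k−1)/2}` for odd `k`. -/
noncomputable def kappa (k : ℕ) : ℝ :=
  if k % 2 = 0 then (-1 : ℝ)^(k/2 + 1) else (-1 : ℝ)^((k-1)/2)

/-- The structure maps `l_k` of the algebra of observables: on a list
`[α₁, α₂, α₃, …, α_k]` of (Hamiltonian) forms, with a chosen Hamiltonian
derivation `Dm α` for each form,
`l_k(α₁,…,α_k) = κ(k) i_{Δ_{α_k}} ⋯ i_{Δ_{α_3}} {α₁,α₂}` where
`{α,β} = i_{Δ_α} d_{DL} β`;  `l` is `0` on lists of length `< 2`. -/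
noncomputable def lmap {DL : Type} [LieRing DL] {Ω : Type} [AddCommGroup Ω] [Module ℝ Ω]
    (C : CartanCalcU DL Ω) (Dm : Ω → DL) : List Ω → Ω
  | a :: b :: rest =>
      kappa (rest.length + 2) •
        (rest.map Dm).foldl (fun w Δ => C.ι Δ w) (C.ι (Dm a) (C.d b))
  | _ => 0

namespace ObsProof
set_option linter.unusedSectionVars false

lemma neg_one_pow_congr {a b : ℕ} (h : a % 2 = b % 2) : ((-1:ℝ))^a = (-1:ℝ)^b := by
  rw [← Nat.div_add_mod a 2, ← Nat.div_add_mod b 2, h]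
  simp [pow_add, pow_mul, neg_one_sq]

lemma kappa_succ (k : ℕ) : kappa (k+1) = (-1:ℝ)^(k+1) * kappa k := by
  unfold kappa
  rcases Nat.even_or_odd k with ⟨t, rfl⟩ | ⟨t, rfl⟩
  · have h1 : (t + t) % 2 = 0 := by omega
    have h2 : (t + t + 1) % 2 = 1 := by omega
    rw [if_neg (by omega), if_pos h1, ← pow_add]
    exact neg_one_pow_congr (by omega)
  · have h1 : (2*t+1) % 2 = 1 := by omega
    rw [if_pos (by omega), if_neg (by omega), ← pow_add]
    exact neg_one_pow_congr (by omega)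

lemma kappa_two : kappa 2 = 1 := by norm_num [kappa]
lemma kappa_three : kappa 3 = -1 := by norm_num [kappa]

variable {DL : Type} [LieRing DL] [Module ℝ DL] {Ω : Type} [AddCommGroup Ω] [Module ℝ Ω]

lemma iota_neg (C : CartanCalcU DL Ω) (Δ : DL) (w : Ω) : C.ι (-Δ) w = - C.ι Δ w := by
  have := C.ι_addD Δ (-Δ) w
  rw [add_neg_cancel, C.ι_zeroD] at this
  exact eq_neg_of_add_eq_zero_right this.symm

lemma iota_sub (C : CartanCalcU DL Ω) (Δ Δ' : DL) (w : Ω) :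
    C.ι (Δ - Δ') w = C.ι Δ w - C.ι Δ' w := by
  rw [sub_eq_add_neg, C.ι_addD, iota_neg, sub_eq_add_neg]

lemma lie_iota (C : CartanCalcU DL Ω) (Δ Δ' : DL) (w : Ω) :
    C.lie Δ (C.ι Δ' w) = C.ι Δ' (C.lie Δ w) + C.ι ⁅Δ,Δ'⁆ w := by
  rw [C.ι_bracket]; abel

lemma lie_d_eq (C : CartanCalcU DL Ω) (Δ : DL) (w : Ω) :
    C.lie Δ (C.d w) = C.d (C.ι Δ (C.d w)) := by
  rw [C.cartan, C.d_d, map_zero, zero_add]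

lemma d_iota (C : CartanCalcU DL Ω) (Δ : DL) (w : Ω) :
    C.d (C.ι Δ w) = C.lie Δ w - C.ι Δ (C.d w) := by
  rw [C.cartan]; abel

/-- iterated contraction -/
def F (C : CartanCalcU DL Ω) (L : List DL) (w : Ω) : Ω := L.foldl (fun w Δ => C.ι Δ w) w

@[simp] lemma F_nil (C : CartanCalcU DL Ω) (w : Ω) : F C [] w = w := rfl

lemma F_cons (C : CartanCalcU DL Ω) (Δ : DL) (L : List DL) (w : Ω) :
    F C (Δ :: L) w = F C L (C.ι Δ w) := rfl

lemma F_concat (C : CartanCalcU DL Ω) (Δ : DL) (L : List DL) (w : Ω) :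
    F C (L ++ [Δ]) w = C.ι Δ (F C L w) := List.foldl_concat _ _ _ _

lemma F_append (C : CartanCalcU DL Ω) (L₁ L₂ : List DL) (w : Ω) :
    F C (L₁ ++ L₂) w = F C L₂ (F C L₁ w) := List.foldl_append

lemma F_add (C : CartanCalcU DL Ω) (L : List DL) (w w' : Ω) :
    F C L (w + w') = F C L w + F C L w' := by
  induction L generalizing w w' with
  | nil => rfl
  | cons Δ L ih => rw [F_cons, map_add, ih, F_cons, F_cons]

lemma F_smul (C : CartanCalcU DL Ω) (L : List DL) (c : ℝ) (w : Ω) :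
    F C L (c • w) = c • F C L w := by
  induction L generalizing w with
  | nil => rfl
  | cons Δ L ih => rw [F_cons, map_smul, ih, F_cons]

lemma F_neg (C : CartanCalcU DL Ω) (L : List DL) (w : Ω) :
    F C L (-w) = - F C L w := by
  induction L generalizing w with
  | nil => rfl
  | cons Δ L ih => rw [F_cons, map_neg, ih, F_cons]

lemma F_zero (C : CartanCalcU DL Ω) (L : List DL) : F C L (0 : Ω) = 0 := by
  induction L with
  | nil => rfl
  | cons Δ L ih => rw [F_cons, map_zero, ih]

lemma iota_F (C : CartanCalcU DL Ω) (Δ : DL) (L : List DL) (w : Ω) :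
    C.ι Δ (F C L w) = ((-1:ℝ)^L.length) • F C L (C.ι Δ w) := by
  induction L generalizing w with
  | nil => simp
  | cons Δ' L ih =>
      rw [F_cons, ih, F_cons, C.ι_ι, F_neg, List.length_cons, pow_succ]
      rw [smul_neg, mul_comm, ← smul_smul]
      norm_num

lemma F_cons_cons (C : CartanCalcU DL Ω) (Δ Δ' : DL) (L : List DL) (w : Ω) :
    F C (Δ :: Δ' :: L) w = - F C (Δ' :: Δ :: L) w := by
  rw [F_cons, F_cons, F_cons, F_cons, C.ι_ι Δ', F_neg]


section Xi
variable {C : CartanCalcU DL Ω} {ξ : Submodule ℝ (DL × Ω)}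

def Ham (C : CartanCalcU DL Ω) (ξ : Submodule ℝ (DL × Ω)) (α : Ω) : Prop :=
  ∃ Δ, ((Δ, C.d α) : DL × Ω) ∈ ξ

def Ann (C : CartanCalcU DL Ω) (ξ : Submodule ℝ (DL × Ω)) (w : Ω) : Prop :=
  ∀ Δ : DL, ((Δ, (0:Ω)) : DL × Ω) ∈ ξ → C.ι Δ w = 0

variable (hiso : ∀ e ∈ ξ, ∀ e' ∈ ξ, C.ι e.1 e'.2 + C.ι e'.1 e.2 = 0)
variable (hinv : ∀ e ∈ ξ, ∀ e' ∈ ξ,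
      ((⁅e.1, e'.1⁆, C.lie e.1 e'.2 - C.ι e'.1 (C.d e.2)) : DL × Ω) ∈ ξ)
variable (Dm : Ω → DL)
variable (hDm : ∀ α : Ω, (∃ Δ, ((Δ, C.d α) : DL × Ω) ∈ ξ) → ((Dm α, C.d α) : DL × Ω) ∈ ξ)

include hiso in
lemma pair {Δ Δ' : DL} {w w' : Ω} (h : ((Δ, w) : DL × Ω) ∈ ξ) (h' : ((Δ', w') : DL × Ω) ∈ ξ) :
    C.ι Δ w' = - C.ι Δ' w :=
  eq_neg_of_add_eq_zero_left (hiso _ h _ h')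

include hiso in
lemma ann_d {b : Ω} (hb : Ham C ξ b) : Ann C ξ (C.d b) := by
  obtain ⟨Δ', h'⟩ := hb
  intro Δ h
  rw [pair hiso h h', map_zero, neg_zero]

lemma ann_iota {w : Ω} (hw : Ann C ξ w) (Δ' : DL) : Ann C ξ (C.ι Δ' w) := by
  intro Δ h
  rw [C.ι_ι, hw Δ h, map_zero, neg_zero]

lemma ann_F {w : Ω} (hw : Ann C ξ w) (L : List DL) : Ann C ξ (F C L w) := by
  induction L generalizing w with
  | nil => exact hw
  | cons Δ' L ih => rw [F_cons]; exact ih (ann_iota hw Δ')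

lemma iota_eq_of_sub {Δ Δ' : DL} {w : Ω} (h : ((Δ - Δ', (0:Ω)) : DL × Ω) ∈ ξ)
    (hw : Ann C ξ w) : C.ι Δ w = C.ι Δ' w := by
  have h2 := hw _ h
  rw [iota_sub] at h2
  exact sub_eq_zero.mp h2

include hinv in
lemma br_mem {Δ Δ' : DL} {x y : Ω} (h : ((Δ, C.d x) : DL × Ω) ∈ ξ)
    (h' : ((Δ', C.d y) : DL × Ω) ∈ ξ) :
    ((⁅Δ, Δ'⁆, C.d (C.ι Δ (C.d y))) : DL × Ω) ∈ ξ := by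
  have h3 := hinv _ h _ h'
  have e : C.lie Δ (C.d y) - C.ι Δ' (C.d (C.d x)) = C.d (C.ι Δ (C.d y)) := by
    rw [C.d_d, map_zero, sub_zero, lie_d_eq]
  rwa [e] at h3

include hinv hDm in
lemma ham_br {x y : Ω} (hx : Ham C ξ x) (hy : Ham C ξ y) :
    Ham C ξ (C.ι (Dm x) (C.d y)) :=
  ⟨⁅Dm x, Dm y⁆, br_mem hinv (hDm x hx) (hDm y hy)⟩

include hinv hDm in
lemma Dm_br {x y : Ω} (hx : Ham C ξ x) (hy : Ham C ξ y) {w : Ω} (hw : Ann C ξ w) :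
    C.ι (Dm (C.ι (Dm x) (C.d y))) w = C.ι ⁅Dm x, Dm y⁆ w := by
  apply iota_eq_of_sub _ hw
  have h1 := hDm _ (ham_br hinv Dm hDm hx hy)
  have h2 := br_mem hinv (hDm x hx) (hDm y hy)
  have h3 := ξ.sub_mem h1 h2
  rwa [Prod.mk_sub_mk, sub_self] at h3

include hiso hDm in
lemma skew {x y : Ω} (hx : Ham C ξ x) (hy : Ham C ξ y) :
    C.ι (Dm x) (C.d y) = - C.ι (Dm y) (C.d x) :=
  pair hiso (hDm x hx) (hDm y hy)

include hiso hinv hDm in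
lemma pair_br {x y c : Ω} (hx : Ham C ξ x) (hy : Ham C ξ y) (hc : Ham C ξ c) :
    C.ι ⁅Dm x, Dm y⁆ (C.d c) = - C.ι (Dm c) (C.d (C.ι (Dm x) (C.d y))) :=
  pair hiso (br_mem hinv (hDm x hx) (hDm y hy)) (hDm c hc)

end Xi

section Lmap
variable {C : CartanCalcU DL Ω} (Dm : Ω → DL)

lemma lmap_eq (a b : Ω) (rest : List Ω) :
    lmap C Dm (a :: b :: rest)
      = kappa (rest.length + 2) • F C (rest.map Dm) (C.ι (Dm a) (C.d b)) := rfl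

lemma lmap_concat {as : List Ω} (has : 2 ≤ as.length) (x : Ω) :
    lmap C Dm (as ++ [x]) = ((-1:ℝ)^(as.length + 1)) • C.ι (Dm x) (lmap C Dm as) := by
  obtain ⟨a, rest0, rfl⟩ : ∃ a t, as = a :: t := by
    cases as with
    | nil => simp at has
    | cons a t => exact ⟨a, t, rfl⟩
  obtain ⟨b, rest, rfl⟩ : ∃ b t, rest0 = b :: t := by
    cases rest0 with
    | nil => simp at has
    | cons b t => exact ⟨b, t, rfl⟩
  show lmap C Dm (a :: b :: (rest ++ [x])) = _
  rw [lmap_eq, lmap_eq, List.map_append, List.map_singleton, F_concat, map_smul, List.length_append]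
  simp only [List.length_nil, List.length_cons, Nat.zero_add]
  rw [show rest.length + 0 + 1 + 2 = (rest.length + 2) + 1 from by omega, kappa_succ, mul_smul]

lemma iota_lmap {as : List Ω} (has : 2 ≤ as.length) (x : Ω) :
    C.ι (Dm x) (lmap C Dm as) = ((-1:ℝ)^(as.length + 1)) • lmap C Dm (as ++ [x]) := by
  rw [lmap_concat Dm has, smul_smul, ← pow_add,
    neg_one_pow_congr (b := 0) (by omega), pow_zero, one_smul]

end Lmap

section Lists

lemma range'_concat' (n : ℕ) : List.range' 1 (n+1) = List.range' 1 n ++ [n+1] := by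
  rw [List.range'_concat]
  have : 1 + 1*n = n+1 := by omega
  rw [this]

lemma filter_ne_concat {i n : ℕ} (h : i ≤ n) :
    (List.range' 1 (n+1)).filter (fun k => k ≠ i)
      = (List.range' 1 n).filter (fun k => k ≠ i) ++ [n+1] := by
  rw [range'_concat', List.filter_append]
  congr 1
  simp [List.filter_cons, show ¬(n+1 = i) from by omega]

lemma filter_ne2_concat {i j n : ℕ} (hi : i ≤ n) (hj : j ≤ n) :
    (List.range' 1 (n+1)).filter (fun k => k ≠ i ∧ k ≠ j)
      = (List.range' 1 n).filter (fun k => k ≠ i ∧ k ≠ j) ++ [n+1] := by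
  rw [range'_concat', List.filter_append]
  congr 1
  simp [List.filter_cons, show ¬(n+1 = i) from by omega, show ¬(n+1 = j) from by omega]

lemma filter_ne2_top {i n : ℕ} (hi : i ≤ n) :
    (List.range' 1 (n+1)).filter (fun k => k ≠ i ∧ k ≠ (n+1))
      = (List.range' 1 n).filter (fun k => k ≠ i) := by
  rw [range'_concat', List.filter_append]
  have h2 : (List.range' 1 n).filter (fun k => k ≠ i ∧ k ≠ (n+1))
      = (List.range' 1 n).filter (fun k => k ≠ i) := by
    apply List.filter_congr
    intro x hx
    rw [List.mem_range'_1] at hx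
    simp [show ¬(x = n+1) from by omega]
  rw [h2]
  simp

lemma length_filter_ne {i n : ℕ} (h1 : 1 ≤ i) (h2 : i ≤ n) :
    ((List.range' 1 n).filter (fun k => k ≠ i)).length = n - 1 := by
  induction n with
  | zero => omega
  | succ n ih =>
    rcases Nat.lt_or_ge i (n+1) with h | h
    · rw [filter_ne_concat (by omega), List.length_append, ih (by omega)]
      simp; omega
    · have hi : i = n + 1 := by omega
      subst hi
      rw [range'_concat', List.filter_append]
      have h3 : (List.range' 1 n).filter (fun k => k ≠ n+1) = List.range' 1 n := by
        apply List.filter_eq_self.mpr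
        intro x hx
        rw [List.mem_range'_1] at hx
        simp; omega
      rw [h3]
      simp

lemma length_filter_ne2 {i j n : ℕ} (h1 : 1 ≤ i) (hij : i < j) (h2 : j ≤ n) :
    ((List.range' 1 n).filter (fun k => k ≠ i ∧ k ≠ j)).length = n - 2 := by
  induction n with
  | zero => omega
  | succ n ih =>
    rcases Nat.lt_or_ge j (n+1) with h | h
    · rw [filter_ne2_concat (by omega) (by omega), List.length_append, ih (by omega)]
      simp; omega
    · have hj : j = n + 1 := by omega
      subst hj
      rw [filter_ne2_top (by omega), length_filter_ne h1 (by omega)]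
      omega

end Lists



section L
variable {C : CartanCalcU DL Ω} {ξ : Submodule ℝ (DL × Ω)}
variable (hiso : ∀ e ∈ ξ, ∀ e' ∈ ξ, C.ι e.1 e'.2 + C.ι e'.1 e.2 = 0)
variable (hinv : ∀ e ∈ ξ, ∀ e' ∈ ξ,
      ((⁅e.1, e'.1⁆, C.lie e.1 e'.2 - C.ι e'.1 (C.d e.2)) : DL × Ω) ∈ ξ)
variable (Dm : Ω → DL)
variable (hDm : ∀ α : Ω, (∃ Δ, ((Δ, C.d α) : DL × Ω) ∈ ξ) → ((Dm α, C.d α) : DL × Ω) ∈ ξ)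

lemma filter_ne_top {m : ℕ} :
    (List.range' 1 (m+1)).filter (fun k => k ≠ m+1) = List.range' 1 m := by
  rw [range'_concat', List.filter_append]
  have h3 : (List.range' 1 m).filter (fun k => k ≠ m+1) = List.range' 1 m := by
    apply List.filter_eq_self.mpr
    intro x hx
    rw [List.mem_range'_1] at hx
    simp; omega
  rw [h3]
  simp

include hiso hinv hDm in
lemma Llem : ∀ m : ℕ, 2 ≤ m → ∀ β : Ω, Ham C ξ β →
    ∀ a : ℕ → Ω, (∀ k ∈ Finset.Icc 1 m, Ham C ξ (a k)) →
    C.lie (Dm β) (lmap C Dm ((List.range' 1 m).map a)) =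
      ∑ i ∈ Finset.Icc 1 m, (-1:ℝ)^i •
        lmap C Dm ((C.ι (Dm (a i)) (C.d β))
          :: ((List.range' 1 m).filter (fun k => k ≠ i)).map a) := by
  intro m hm
  induction m, hm using Nat.le_induction with
  | base =>
    intro β hβ a ha
    have h1 : Ham C ξ (a 1) := ha 1 (by decide)
    have h2 : Ham C ξ (a 2) := ha 2 (by decide)
    have hr : (List.range' 1 2).map a = [a 1, a 2] := rfl
    have hf1 : (List.range' 1 2).filter (fun k => k ≠ 1) = [2] := by decide
    have hf2 : (List.range' 1 2).filter (fun k => k ≠ 2) = [1] := by decide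
    have hsum : ∀ f : ℕ → Ω, ∑ i ∈ Finset.Icc 1 2, f i = f 1 + f 2 := by
      intro f
      rw [show (2:ℕ) = 1 + 1 from rfl, Finset.sum_Icc_succ_top (by omega),
        Finset.Icc_self, Finset.sum_singleton]
    rw [hr, hsum, hf1, hf2]
    have e1 : lmap C Dm [a 1, a 2] = C.ι (Dm (a 1)) (C.d (a 2)) := by
      rw [show [a 1, a 2] = a 1 :: a 2 :: ([] : List Ω) from rfl, lmap_eq]
      simp [kappa_two]
    have e2 : lmap C Dm [C.ι (Dm (a 1)) (C.d β), a 2]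
        = C.ι ⁅Dm (a 1), Dm β⁆ (C.d (a 2)) := by
      rw [show [C.ι (Dm (a 1)) (C.d β), a 2]
          = (C.ι (Dm (a 1)) (C.d β)) :: a 2 :: ([] : List Ω) from rfl, lmap_eq]
      simp [kappa_two]
      exact Dm_br hinv Dm hDm h1 hβ (ann_d hiso h2)
    have e3 : lmap C Dm [C.ι (Dm (a 2)) (C.d β), a 1]
        = C.ι ⁅Dm (a 2), Dm β⁆ (C.d (a 1)) := by
      rw [show [C.ι (Dm (a 2)) (C.d β), a 1]
          = (C.ι (Dm (a 2)) (C.d β)) :: a 1 :: ([] : List Ω) from rfl, lmap_eq]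
      simp [kappa_two]
      exact Dm_br hinv Dm hDm h2 hβ (ann_d hiso h1)
    simp only [List.map_cons, List.map_nil]
    rw [e1, e2, e3]
    have e4 : C.ι ⁅Dm (a 2), Dm β⁆ (C.d (a 1))
        = C.ι (Dm (a 1)) (C.d (C.ι (Dm β) (C.d (a 2)))) := by
      rw [pair_br hiso hinv Dm hDm h2 hβ h1, skew hiso Dm hDm h2 hβ, map_neg, map_neg,
        neg_neg]
    have e5 : C.lie (Dm β) (C.ι (Dm (a 1)) (C.d (a 2)))
        = C.ι (Dm (a 1)) (C.d (C.ι (Dm β) (C.d (a 2)))) + C.ι ⁅Dm β, Dm (a 1)⁆ (C.d (a 2)) := by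
      rw [lie_iota, lie_d_eq]
    rw [e5, e4]
    have e6 : C.ι ⁅Dm β, Dm (a 1)⁆ (C.d (a 2))
        = - C.ι ⁅Dm (a 1), Dm β⁆ (C.d (a 2)) := by
      rw [← lie_skew, iota_neg]
    rw [e6]
    have : ((-1:ℝ))^1 = -1 := by norm_num
    rw [this]
    have : ((-1:ℝ))^2 = 1 := by norm_num
    rw [this, one_smul, neg_smul, one_smul]
    abel
  | succ m hm ih =>
    intro β hβ a ha
    have ham : ∀ k ∈ Finset.Icc 1 m, Ham C ξ (a k) := by
      intro k hk
      rw [Finset.mem_Icc] at hk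
      exact ha k (by rw [Finset.mem_Icc]; omega)
    have hm1 : Ham C ξ (a (m+1)) := ha (m+1) (by rw [Finset.mem_Icc]; omega)
    have hX := ih β hβ a ham
    have hlen : ((List.range' 1 m).map a).length = m := by simp
    have hsplit : (List.range' 1 (m+1)).map a = (List.range' 1 m).map a ++ [a (m+1)] := by
      rw [range'_concat', List.map_append, List.map_singleton]
    have h1 : lmap C Dm ((List.range' 1 (m+1)).map a)
        = ((-1:ℝ)^(m+1)) • C.ι (Dm (a (m+1))) (lmap C Dm ((List.range' 1 m).map a)) := by
      rw [hsplit, lmap_concat Dm (by rw [hlen]; omega), hlen]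
    rw [h1, map_smul, lie_iota, Finset.sum_Icc_succ_top (by omega : 1 ≤ m + 1), smul_add]
    have eq1 : ((-1:ℝ)^(m+1)) • C.ι (Dm (a (m+1))) (C.lie (Dm β) (lmap C Dm ((List.range' 1 m).map a)))
        = ∑ i ∈ Finset.Icc 1 m, (-1:ℝ)^i •
            lmap C Dm ((C.ι (Dm (a i)) (C.d β))
              :: ((List.range' 1 (m+1)).filter (fun k => k ≠ i)).map a) := by
      rw [hX, map_sum, Finset.smul_sum]
      apply Finset.sum_congr rfl
      intro i hi
      rw [Finset.mem_Icc] at hi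
      have hQlen : ((C.ι (Dm (a i)) (C.d β))
          :: ((List.range' 1 m).filter (fun k => k ≠ i)).map a).length = m := by
        rw [List.length_cons, List.length_map, length_filter_ne hi.1 hi.2]
        omega
      rw [map_smul, iota_lmap Dm (by rw [hQlen]; omega) (a (m+1)), hQlen]
      rw [List.cons_append, ← List.map_singleton (f := a), ← List.map_append,
        ← filter_ne_concat hi.2]
      rw [smul_smul, smul_smul]
      congr 1
      rw [mul_assoc, ← pow_add, ← pow_add]
      exact neg_one_pow_congr (by omega)
    rw [eq1]
    congr 1
    -- eq2 : the top term
    obtain ⟨k, rfl⟩ : ∃ k, m = k + 2 := ⟨m - 2, by omega⟩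
    have h2 : Ham C ξ (a 2) := ha 2 (by rw [Finset.mem_Icc]; omega)
    have ha1 : Ham C ξ (a 1) := ha 1 (by rw [Finset.mem_Icc]; omega)
    rw [filter_ne_top]
    have hr : List.range' 1 (k+2) = 1 :: 2 :: List.range' 3 k := by
      rw [show k + 2 = (k+1) + 1 from rfl, List.range'_succ, List.range'_succ]
    have hXe : lmap C Dm ((List.range' 1 (k+2)).map a)
        = kappa (k+2) • F C (((List.range' 3 k).map a).map Dm) (C.ι (Dm (a 1)) (C.d (a 2))) := by
      rw [hr]
      simp only [List.map_cons]
      rw [lmap_eq]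
      congr 2
    have hRe : lmap C Dm ((C.ι (Dm (a (k+2+1))) (C.d β)) :: (List.range' 1 (k+2)).map a)
        = kappa (k+3) • F C (Dm (a 2) :: ((List.range' 3 k).map a).map Dm)
            (C.ι (Dm (C.ι (Dm (a (k+2+1))) (C.d β))) (C.d (a 1))) := by
      rw [hr]
      simp only [List.map_cons]
      rw [lmap_eq]
      congr 2
      rw [List.length_cons, List.length_map, List.length_range']
    rw [hXe, hRe]
    congr 1
    have hLlen : (((List.range' 3 k).map a).map Dm).length = k := by simp
    have s1 : C.ι ⁅Dm β, Dm (a (k+2+1))⁆ (C.d (a 2))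
        = - C.ι (Dm (a 2)) (C.d (C.ι (Dm β) (C.d (a (k+2+1))))) :=
      pair_br hiso hinv Dm hDm hβ hm1 h2
    have s2 : C.ι (Dm (C.ι (Dm (a (k+2+1))) (C.d β))) (C.d (a 1))
        = C.ι (Dm (a 1)) (C.d (C.ι (Dm β) (C.d (a (k+2+1))))) := by
      rw [Dm_br hinv Dm hDm hm1 hβ (ann_d hiso ha1),
        pair_br hiso hinv Dm hDm hm1 hβ ha1,
        skew hiso Dm hDm hm1 hβ, map_neg, map_neg, neg_neg]
    have lhs_eq : C.ι ⁅Dm β, Dm (a (k+2+1))⁆ (C.ι (Dm (a 1)) (C.d (a 2)))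
        = C.ι (Dm (a 1)) (C.ι (Dm (a 2)) (C.d (C.ι (Dm β) (C.d (a (k+2+1)))))) := by
      rw [C.ι_ι, s1, map_neg, neg_neg]
    have rhs_eq : C.ι (Dm (a 2)) (C.ι (Dm (C.ι (Dm (a (k+2+1))) (C.d β))) (C.d (a 1)))
        = - C.ι (Dm (a 1)) (C.ι (Dm (a 2)) (C.d (C.ι (Dm β) (C.d (a (k+2+1)))))) := by
      rw [s2, C.ι_ι]
    have hY : C.ι ⁅Dm β, Dm (a (k+2+1))⁆ (C.ι (Dm (a 1)) (C.d (a 2)))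
        = - C.ι (Dm (a 2)) (C.ι (Dm (C.ι (Dm (a (k+2+1))) (C.d β))) (C.d (a 1))) := by
      rw [lhs_eq, rhs_eq, neg_neg]
    rw [map_smul, iota_F, hLlen, hY, F_neg, F_cons]
    have hk : kappa (k+3) = -((-1:ℝ)^k * kappa (k+2)) := by
      rw [show k+3 = (k+2)+1 from rfl, kappa_succ, pow_add, pow_add]
      ring
    rw [hk]
    simp only [smul_neg, smul_smul, neg_smul]
    congr 2
    ring
  -- end
include hiso hDm in
lemma F_indep (Dm' : Ω → DL)
    (hDm' : ∀ α : Ω, (∃ Δ, ((Δ, C.d α) : DL × Ω) ∈ ξ) → ((Dm' α, C.d α) : DL × Ω) ∈ ξ) :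
    ∀ (rest : List Ω) (w : Ω), Ann C ξ w → (∀ r ∈ rest, Ham C ξ r) →
    F C (rest.map Dm) w = F C (rest.map Dm') w := by
  intro rest
  induction rest with
  | nil => intro w _ _; rfl
  | cons r rest ih =>
    intro w hw hr
    rw [List.map_cons, List.map_cons, F_cons, F_cons]
    have he : C.ι (Dm r) w = C.ι (Dm' r) w := by
      apply iota_eq_of_sub _ hw
      have h3 := ξ.sub_mem (hDm r (hr r (by simp))) (hDm' r (hr r (by simp)))
      rwa [Prod.mk_sub_mk, sub_self] at h3
    rw [he]
    exact ih (C.ι (Dm' r) w) (ann_iota hw _) (fun x hx => hr x (by simp [hx]))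

end L

lemma cancel_aux {M : Type*} [AddCommGroup M] (A Q B : M) (h : A + B = 0) :
    A - Q + (Q + B) = 0 := by rw [← h]; abel

end ObsProof

open ObsProof

/-- Theorem 5.5: for an isotropic involutive subbundle
`ξ ⊂ (𝔻L)^p`, the complex `Γ(L) → Ω¹(DL,L) → ⋯ → Ω^{p−1}_Ham(DL,L)` with
`l₁ = d_{DL}` and the multibrackets
`l_k(α₁,…,α_k) = κ(k) i_{Δ_{α_k}}⋯i_{Δ_{α_3}}{α₁,α₂}` (nonzero only on degree-0
arguments) is a `p`-term L∞-algebra.  Concretely: `l₁² = 0`; the maps `l_k` are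
independent of the choice of Hamiltonian derivations; they are skew-symmetric;
the higher Jacobi identities hold on Hamiltonian arguments (only `j = 1` and
`j = n−1` contribute); and the terms `l_n(l₁h, α₂, …)` vanish. -/
theorem observables_p_term_Linfty (DL : Type) [LieRing DL] [Module ℝ DL]
    (Ω : Type) [AddCommGroup Ω] [Module ℝ Ω]
    (C : CartanCalcU DL Ω) (ξ : Submodule ℝ (DL × Ω))
    (hiso : ∀ e ∈ ξ, ∀ e' ∈ ξ, C.ι e.1 e'.2 + C.ι e'.1 e.2 = 0)
    (hinv : ∀ e ∈ ξ, ∀ e' ∈ ξ,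
      ((⁅e.1, e'.1⁆, C.lie e.1 e'.2 - C.ι e'.1 (C.d e.2)) : DL × Ω) ∈ ξ)
    (Dm : Ω → DL)
    (hDm : ∀ α : Ω, (∃ Δ, ((Δ, C.d α) : DL × Ω) ∈ ξ) → ((Dm α, C.d α) : DL × Ω) ∈ ξ) :
    -- `l₁ ∘ l₁ = 0`
    (∀ a : Ω, C.d (C.d a) = 0) ∧
    -- the maps `l_k` do not depend on the choice of Hamiltonian derivations
    (∀ Dm' : Ω → DL,
      (∀ α : Ω, (∃ Δ, ((Δ, C.d α) : DL × Ω) ∈ ξ) → ((Dm' α, C.d α) : DL × Ω) ∈ ξ) →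
      ∀ as : List Ω, (∀ a ∈ as, ∃ Δ, ((Δ, C.d a) : DL × Ω) ∈ ξ) →
        lmap C Dm as = lmap C Dm' as) ∧
    -- skew-symmetry (adjacent transpositions of Hamiltonian arguments)
    (∀ (l₁ l₂ : List Ω) (a b : Ω),
      (∀ x ∈ l₁ ++ a :: b :: l₂, ∃ Δ, ((Δ, C.d x) : DL × Ω) ∈ ξ) →
      lmap C Dm (l₁ ++ a :: b :: l₂) = - lmap C Dm (l₁ ++ b :: a :: l₂)) ∧
    -- the higher Jacobi identities on Hamiltonian arguments (`n ≥ 3`):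
    -- `l₁(l_n(α₁,…,α_n)) + Σ_{i<j} (−1)^{i+j−1} l_{n−1}({α_i,α_j}, α₁,…,α̂_i,…,α̂_j,…,α_n) = 0`
    (∀ (n : ℕ), 3 ≤ n → ∀ a : ℕ → Ω,
      (∀ k ∈ Finset.Icc 1 n, ∃ Δ, ((Δ, C.d (a k)) : DL × Ω) ∈ ξ) →
      C.d (lmap C Dm ((List.range' 1 n).map a))
        + (∑ i ∈ Finset.Icc 1 n, ∑ j ∈ Finset.Icc (i+1) n,
            ((-1 : ℝ)^(i+j-1)) •
              lmap C Dm ((C.ι (Dm (a i)) (C.d (a j)))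
                :: ((List.range' 1 n).filter (fun k => k ≠ i ∧ k ≠ j)).map a)) = 0) ∧
    -- `l_n(l₁ h, α₂, …, α_n) = 0`
    (∀ (h : Ω) (rest : List Ω),
      (∀ x ∈ rest, ∃ Δ, ((Δ, C.d x) : DL × Ω) ∈ ξ) →
      lmap C Dm (C.d h :: rest) = 0) := by
  refine ⟨C.d_d, ?_, ?_, ?_, ?_⟩
  · -- independence of Dm
    intro Dm' hDm' as has
    rcases as with _ | ⟨a, _ | ⟨b, rest⟩⟩
    · rfl
    · rfl
    · have ha : Ham C ξ a := has a (by simp)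
      have hb : Ham C ξ b := has b (by simp)
      rw [lmap_eq, lmap_eq]
      congr 1
      have he : C.ι (Dm a) (C.d b) = C.ι (Dm' a) (C.d b) := by
        apply iota_eq_of_sub _ (ann_d hiso hb)
        have h3 := ξ.sub_mem (hDm a ha) (hDm' a ha)
        rwa [Prod.mk_sub_mk, sub_self] at h3
      rw [he]
      exact F_indep hiso Dm hDm Dm' hDm' rest _ (ann_iota (ann_d hiso hb) _)
        (fun x hx => has x (by simp [hx]))
  · -- skew symmetry
    intro l₁ l₂ a b hall
    rcases l₁ with _ | ⟨x, _ | ⟨y, t⟩⟩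
    · have ha : Ham C ξ a := hall a (by simp)
      have hb : Ham C ξ b := hall b (by simp)
      simp only [List.nil_append]
      rw [lmap_eq, lmap_eq, skew hiso Dm hDm ha hb, F_neg, smul_neg]
    · have ha : Ham C ξ a := hall a (by simp)
      have hb : Ham C ξ b := hall b (by simp)
      simp only [List.cons_append, List.nil_append]
      rw [lmap_eq, lmap_eq]
      simp only [List.length_cons, List.map_cons]
      rw [F_cons, F_cons]
      have key : C.ι (Dm b) (C.ι (Dm x) (C.d a)) = - C.ι (Dm a) (C.ι (Dm x) (C.d b)) := by
        rw [C.ι_ι, skew hiso Dm hDm hb ha, map_neg, neg_neg, C.ι_ι (Dm x) (Dm a)]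
      rw [key, F_neg, smul_neg]
    · simp only [List.cons_append]
      rw [lmap_eq, lmap_eq]
      simp only [List.map_append, List.map_cons, List.length_append, List.length_cons]
      rw [F_append, F_append, F_cons_cons, smul_neg]
  · -- Jacobi
    intro n hn
    induction n, hn using Nat.le_induction with
    | base =>
      intro a ha
      have h1 : Ham C ξ (a 1) := ha 1 (by decide)
      have h2 : Ham C ξ (a 2) := ha 2 (by decide)
      have h3 : Ham C ξ (a 3) := ha 3 (by decide)
      have houter : ∀ f : ℕ → Ω, ∑ i ∈ Finset.Icc 1 3, f i = f 1 + f 2 + f 3 := by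
        intro f
        rw [show (3:ℕ) = 2 + 1 from rfl, Finset.sum_Icc_succ_top (by omega),
          show (2:ℕ) = 1 + 1 from rfl, Finset.sum_Icc_succ_top (by omega),
          Finset.Icc_self, Finset.sum_singleton]
      rw [houter]
      rw [show Finset.Icc (1+1) 3 = ({2, 3} : Finset ℕ) from by decide]
      rw [show Finset.Icc (2+1) 3 = ({3} : Finset ℕ) from by decide]
      rw [show Finset.Icc (3+1) 3 = (∅ : Finset ℕ) from by decide]
      rw [Finset.sum_empty, Finset.sum_singleton,
        Finset.sum_insert (by decide), Finset.sum_singleton]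
      rw [show ((List.range' 1 3).filter (fun k => k ≠ 1 ∧ k ≠ 2)) = [3] from by decide]
      rw [show ((List.range' 1 3).filter (fun k => k ≠ 1 ∧ k ≠ 3)) = [2] from by decide]
      rw [show ((List.range' 1 3).filter (fun k => k ≠ 2 ∧ k ≠ 3)) = [1] from by decide]
      rw [show (List.range' 1 3).map a = a 1 :: a 2 :: [a 3] from rfl]
      simp only [List.map_cons, List.map_nil]
      rw [lmap_eq]
      rw [show lmap C Dm [C.ι (Dm (a 1)) (C.d (a 2)), a 3]
          = kappa 2 • F C [] (C.ι (Dm (C.ι (Dm (a 1)) (C.d (a 2)))) (C.d (a 3))) from rfl]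
      rw [show lmap C Dm [C.ι (Dm (a 1)) (C.d (a 3)), a 2]
          = kappa 2 • F C [] (C.ι (Dm (C.ι (Dm (a 1)) (C.d (a 3)))) (C.d (a 2))) from rfl]
      rw [show lmap C Dm [C.ι (Dm (a 2)) (C.d (a 3)), a 1]
          = kappa 2 • F C [] (C.ι (Dm (C.ι (Dm (a 2)) (C.d (a 3)))) (C.d (a 1))) from rfl]
      simp only [F_nil, kappa_two, one_smul, List.length_cons, List.length_nil]
      rw [show (0:ℕ) + 1 + 2 = 3 from rfl, kappa_three]
      rw [show (List.map Dm [a 3]) = [Dm (a 3)] from rfl, F_cons, F_nil]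
      -- rewrite the three bracket terms
      have e12 : C.ι (Dm (C.ι (Dm (a 1)) (C.d (a 2)))) (C.d (a 3))
          = - C.ι (Dm (a 3)) (C.d (C.ι (Dm (a 1)) (C.d (a 2)))) := by
        rw [Dm_br hinv Dm hDm h1 h2 (ann_d hiso h3), pair_br hiso hinv Dm hDm h1 h2 h3]
      have e13 : C.ι (Dm (C.ι (Dm (a 1)) (C.d (a 3)))) (C.d (a 2))
          = C.ι ⁅Dm (a 1), Dm (a 3)⁆ (C.d (a 2)) :=
        Dm_br hinv Dm hDm h1 h3 (ann_d hiso h2)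
      have e23 : C.ι (Dm (C.ι (Dm (a 2)) (C.d (a 3)))) (C.d (a 1))
          = C.ι (Dm (a 1)) (C.d (C.ι (Dm (a 3)) (C.d (a 2)))) := by
        rw [Dm_br hinv Dm hDm h2 h3 (ann_d hiso h1), pair_br hiso hinv Dm hDm h2 h3 h1,
          skew hiso Dm hDm h2 h3, map_neg, map_neg, neg_neg]
      rw [e12, e13, e23]
      have ed : C.d (C.ι (Dm (a 3)) (C.ι (Dm (a 1)) (C.d (a 2))))
          = C.lie (Dm (a 3)) (C.ι (Dm (a 1)) (C.d (a 2)))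
            - C.ι (Dm (a 3)) (C.d (C.ι (Dm (a 1)) (C.d (a 2)))) := d_iota C _ _
      have el : C.lie (Dm (a 3)) (C.ι (Dm (a 1)) (C.d (a 2)))
          = C.ι (Dm (a 1)) (C.d (C.ι (Dm (a 3)) (C.d (a 2))))
            + C.ι ⁅Dm (a 3), Dm (a 1)⁆ (C.d (a 2)) := by
        rw [lie_iota, lie_d_eq]
      have eb : C.ι ⁅Dm (a 3), Dm (a 1)⁆ (C.d (a 2))
          = - C.ι ⁅Dm (a 1), Dm (a 3)⁆ (C.d (a 2)) := by
        rw [← lie_skew, iota_neg]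
      rw [neg_one_smul, map_neg, ed, el, eb]
      rw [show ((-1:ℝ))^(1+2-1) = 1 from by norm_num]
      rw [show ((-1:ℝ))^(1+3-1) = -1 from by norm_num]
      rw [show ((-1:ℝ))^(2+3-1) = 1 from by norm_num]
      rw [one_smul, neg_one_smul, one_smul]
      abel
    | succ n hn ih =>
      intro a ha
      have ham : ∀ k ∈ Finset.Icc 1 n, Ham C ξ (a k) := by
        intro k hk
        rw [Finset.mem_Icc] at hk
        exact ha k (by rw [Finset.mem_Icc]; omega)
      have hm1 : Ham C ξ (a (n+1)) := ha (n+1) (by rw [Finset.mem_Icc]; omega)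
      have hIH := ih a ham
      have hlen : ((List.range' 1 n).map a).length = n := by simp
      have hsplit : (List.range' 1 (n+1)).map a = (List.range' 1 n).map a ++ [a (n+1)] := by
        rw [range'_concat', List.map_append, List.map_singleton]
      have h1 : lmap C Dm ((List.range' 1 (n+1)).map a)
          = ((-1:ℝ)^(n+1)) • C.ι (Dm (a (n+1))) (lmap C Dm ((List.range' 1 n).map a)) := by
        rw [hsplit, lmap_concat Dm (by rw [hlen]; omega), hlen]
      have hdXs : (∑ i ∈ Finset.Icc 1 n, ∑ j ∈ Finset.Icc (i+1) n,
            ((-1 : ℝ)^(i+j-1)) • lmap C Dm ((C.ι (Dm (a i)) (C.d (a j)))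
              :: ((List.range' 1 n).filter (fun k => k ≠ i ∧ k ≠ j)).map a))
          = - C.d (lmap C Dm ((List.range' 1 n).map a)) :=
        eq_neg_of_add_eq_zero_right hIH
      have hlie := Llem hiso hinv Dm hDm n (by omega) (a (n+1)) hm1 a ham
      have hsplitsum : (∑ i ∈ Finset.Icc 1 (n+1), ∑ j ∈ Finset.Icc (i+1) (n+1),
            ((-1 : ℝ)^(i+j-1)) • lmap C Dm ((C.ι (Dm (a i)) (C.d (a j)))
              :: ((List.range' 1 (n+1)).filter (fun k => k ≠ i ∧ k ≠ j)).map a))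
          = (∑ i ∈ Finset.Icc 1 n, ∑ j ∈ Finset.Icc (i+1) n,
              ((-1 : ℝ)^(i+j-1)) • lmap C Dm ((C.ι (Dm (a i)) (C.d (a j)))
                :: ((List.range' 1 (n+1)).filter (fun k => k ≠ i ∧ k ≠ j)).map a))
            + ∑ i ∈ Finset.Icc 1 n,
              ((-1 : ℝ)^(i+(n+1)-1)) • lmap C Dm ((C.ι (Dm (a i)) (C.d (a (n+1))))
                :: ((List.range' 1 (n+1)).filter (fun k => k ≠ i ∧ k ≠ (n+1))).map a) := by
        rw [Finset.sum_Icc_succ_top (by omega : 1 ≤ n+1)]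
        rw [Finset.Icc_eq_empty (by omega : ¬ (n+1+1 ≤ n+1)), Finset.sum_empty, add_zero]
        rw [← Finset.sum_add_distrib]
        apply Finset.sum_congr rfl
        intro i hi
        rw [Finset.mem_Icc] at hi
        exact Finset.sum_Icc_succ_top (by omega) _
      have hc1 : (∑ i ∈ Finset.Icc 1 n, ∑ j ∈ Finset.Icc (i+1) n,
            ((-1 : ℝ)^(i+j-1)) • lmap C Dm ((C.ι (Dm (a i)) (C.d (a j)))
              :: ((List.range' 1 (n+1)).filter (fun k => k ≠ i ∧ k ≠ j)).map a))
          = ((-1:ℝ)^(n+1)) • C.ι (Dm (a (n+1)))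
              (C.d (lmap C Dm ((List.range' 1 n).map a))) := by
        have step : ∀ i ∈ Finset.Icc 1 n, ∀ j ∈ Finset.Icc (i+1) n,
            ((-1 : ℝ)^(i+j-1)) • lmap C Dm ((C.ι (Dm (a i)) (C.d (a j)))
              :: ((List.range' 1 (n+1)).filter (fun k => k ≠ i ∧ k ≠ j)).map a)
            = ((-1:ℝ)^n) • C.ι (Dm (a (n+1)))
                (((-1 : ℝ)^(i+j-1)) • lmap C Dm ((C.ι (Dm (a i)) (C.d (a j)))
                  :: ((List.range' 1 n).filter (fun k => k ≠ i ∧ k ≠ j)).map a)) := by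
          intro i hi j hj
          rw [Finset.mem_Icc] at hi hj
          have hlist : ((List.range' 1 (n+1)).filter (fun k => k ≠ i ∧ k ≠ j)).map a
              = ((List.range' 1 n).filter (fun k => k ≠ i ∧ k ≠ j)).map a ++ [a (n+1)] := by
            rw [filter_ne2_concat (by omega) (by omega), List.map_append, List.map_singleton]
          have hql : ((C.ι (Dm (a i)) (C.d (a j)))
              :: ((List.range' 1 n).filter (fun k => k ≠ i ∧ k ≠ j)).map a).length
              = n - 1 := by
            rw [List.length_cons, List.length_map,
              length_filter_ne2 (by omega) (by omega) (by omega)]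
            omega
          rw [hlist, ← List.cons_append, lmap_concat Dm (by rw [hql]; omega), hql]
          rw [map_smul, smul_smul, smul_smul]
          congr 1
          rw [← pow_add, ← pow_add]
          exact neg_one_pow_congr (by omega)
        rw [Finset.sum_congr rfl (fun i hi => Finset.sum_congr rfl (step i hi))]
        have pull : (∑ i ∈ Finset.Icc 1 n, ∑ j ∈ Finset.Icc (i+1) n,
              ((-1:ℝ)^n) • C.ι (Dm (a (n+1)))
                (((-1 : ℝ)^(i+j-1)) • lmap C Dm ((C.ι (Dm (a i)) (C.d (a j)))
                  :: ((List.range' 1 n).filter (fun k => k ≠ i ∧ k ≠ j)).map a)))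
            = ((-1:ℝ)^n) • C.ι (Dm (a (n+1)))
                (∑ i ∈ Finset.Icc 1 n, ∑ j ∈ Finset.Icc (i+1) n,
                  ((-1 : ℝ)^(i+j-1)) • lmap C Dm ((C.ι (Dm (a i)) (C.d (a j)))
                    :: ((List.range' 1 n).filter (fun k => k ≠ i ∧ k ≠ j)).map a)) := by
          rw [map_sum, Finset.smul_sum]
          apply Finset.sum_congr rfl
          intro i _
          rw [map_sum, Finset.smul_sum]
        rw [pull, hdXs, map_neg, smul_neg, ← neg_smul]
        congr 1
        rw [pow_succ]
        ring
      have hc2 : (∑ i ∈ Finset.Icc 1 n,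
            ((-1 : ℝ)^(i+(n+1)-1)) • lmap C Dm ((C.ι (Dm (a i)) (C.d (a (n+1))))
              :: ((List.range' 1 (n+1)).filter (fun k => k ≠ i ∧ k ≠ (n+1))).map a))
          = ∑ i ∈ Finset.Icc 1 n,
              ((-1 : ℝ)^(i+n)) • lmap C Dm ((C.ι (Dm (a i)) (C.d (a (n+1))))
                :: ((List.range' 1 n).filter (fun k => k ≠ i)).map a) := by
        apply Finset.sum_congr rfl
        intro i hi
        rw [Finset.mem_Icc] at hi
        rw [show i+(n+1)-1 = i+n from by omega, filter_ne2_top (by omega)]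
      rw [h1, map_smul, d_iota, smul_sub, hsplitsum, hc1, hc2, hlie, Finset.smul_sum]
      apply cancel_aux
      rw [← Finset.sum_add_distrib]
      apply Finset.sum_eq_zero
      intro i hi
      rw [smul_smul, ← pow_add, ← add_smul]
      convert zero_smul ℝ _
      rw [show n+1+i = (i+n)+1 from by omega, pow_succ]
      ring
  · -- l1 term
    intro h rest hrest
    rcases rest with _ | ⟨b, rest'⟩
    · rfl
    · have hb : Ham C ξ b := hrest b (by simp)
      have hham : ((Dm (C.d h), C.d (C.d h)) : DL × Ω) ∈ ξ :=
        hDm _ ⟨0, by rw [C.d_d]; exact ξ.zero_mem⟩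
      rw [C.d_d] at hham
      have h0 : C.ι (Dm (C.d h)) (C.d b) = 0 := ann_d hiso hb _ hham
      rw [lmap_eq, h0, F_zero, smul_zero]
end

section
/- (Proposition 3.7) Let ω ∈ Ω³_cl(DL,L) and B ∈ Ω²(DL,L). The maps φ₀(Δ,α) = (Δ, α + i_Δ B) on Γ(𝔻L) and φ₁ = id on Γ(L) define a strict isomorphism of 2-term L∞-algebras from the one induced by the L-Courant algebroid (𝔻L)_ω to the one induced by (𝔻L)_{ω + d_{DL}B}; in particular φ₀⟦e₁,e₂⟧_ω = ⟦φ₀e₁, φ₀e₂⟧_{ω+d_{DL}B} and φ₀ preserves the pairing up to the relevant structure maps l₂, l₃. -/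
section
variable {DL : Type} [LieRing DL] {Ω : ℕ → Type}
  [∀ n, AddCommGroup (Ω n)] [∀ n, Module ℝ (Ω n)]

/-- The `L`-valued pairing on `Γ(𝔻L)`: `⟨(Δ,α),(∇,β)⟩ = α(∇) + β(Δ)`. -/
def cjPair (C : CartanCalculus DL Ω) (e e' : DL × Ω 1) : Ω 0 :=
  C.ι e.1 0 e'.2 + C.ι e'.1 0 e.2

/-- The `ω`-twisted Courant–Jacobi (skew-symmetrized) bracket on `Γ((𝔻L)_ω)`:
`⟦(Δ,α),(∇,β)⟧_ω = ([Δ,∇], ℒ_Δβ − ℒ_∇α − ½ d(β(Δ) − α(∇)) − i_∇ i_Δ ω)`. -/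
noncomputable def cjSkew (C : CartanCalculus DL Ω) (ω : Ω 3) (e e' : DL × Ω 1) : DL × Ω 1 :=
  (⁅e.1, e'.1⁆,
    C.lie e.1 1 e'.2 - C.lie e'.1 1 e.2
      - (2⁻¹ : ℝ) • C.d 0 (C.ι e.1 0 e'.2 - C.ι e'.1 0 e.2)
      - C.ι e'.1 1 (C.ι e.1 2 ω))

/-- `T(e₁,e₂,e₃) = (1/6)⟨⟦e₁,e₂⟧_ω, e₃⟩ + c.p.`, so that `l₃ = −T`. -/
noncomputable def cjT (C : CartanCalculus DL Ω) (ω : Ω 3) (e₁ e₂ e₃ : DL × Ω 1) : Ω 0 :=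
  (6⁻¹ : ℝ) • (cjPair C (cjSkew C ω e₁ e₂) e₃ + cjPair C (cjSkew C ω e₂ e₃) e₁
    + cjPair C (cjSkew C ω e₃ e₁) e₂)

/-- The gauge transformation `φ₀(Δ,α) = (Δ, α + i_Δ B)`. -/
def gaugeMap (C : CartanCalculus DL Ω) (B : Ω 2) (e : DL × Ω 1) : DL × Ω 1 :=
  (e.1, e.2 + C.ι e.1 1 B)

/-- Magic identity: `ι_{[Δ,∇]} B` in terms of Lie derivatives and `dB`. -/
lemma gauge_key (C : CartanCalculus DL Ω) (B : Ω 2) (Δ N : DL) :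
    C.ι ⁅Δ, N⁆ 1 B
      = C.lie Δ 1 (C.ι N 1 B) - C.lie N 1 (C.ι Δ 1 B)
        + C.d 0 (C.ι N 0 (C.ι Δ 1 B)) - C.ι N 1 (C.ι Δ 2 (C.d 2 B)) := by
  have h1 := C.ι_bracket Δ N 1 B
  have h2 := C.cartan Δ 1 B
  have h3 := C.cartan N 0 (C.ι Δ 1 B)
  rw [h1, h2, map_add]
  -- now: ... - (ι N ι Δ dB + ι N d ι Δ B) = ...
  have h4 : C.ι N 1 (C.d 1 (C.ι Δ 1 B))
      = C.lie N 1 (C.ι Δ 1 B) - C.d 0 (C.ι N 0 (C.ι Δ 1 B)) := by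
    rw [h3]; abel
  rw [h4]; abel

/-- The gauge map preserves the pairing. -/
lemma gauge_pair (C : CartanCalculus DL Ω) (B : Ω 2) (e e' : DL × Ω 1) :
    cjPair C (gaugeMap C B e) (gaugeMap C B e') = cjPair C e e' := by
  simp only [cjPair, gaugeMap, map_add]
  rw [C.ι_ι e.1 e'.1 0 B]
  abel

/-- The gauge map intertwines the twisted brackets. -/
lemma gauge_bracket (C : CartanCalculus DL Ω) (ω : Ω 3) (B : Ω 2) (e₁ e₂ : DL × Ω 1) :
    gaugeMap C B (cjSkew C ω e₁ e₂)
      = cjSkew C (ω + C.d 2 B) (gaugeMap C B e₁) (gaugeMap C B e₂) := by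
  obtain ⟨Δ, α⟩ := e₁
  obtain ⟨N, β⟩ := e₂
  simp only [cjSkew, gaugeMap, Prod.mk.injEq]
  refine ⟨trivial, ?_⟩
  simp only [map_add, map_sub, map_smul]
  rw [gauge_key C B Δ N, C.ι_ι Δ N 0 B]
  simp only [Nat.reduceAdd, map_neg]
  module

end

/-- Proposition 3.7: for `ω ∈ Ω³_cl(DL,L)` and `B ∈ Ω²(DL,L)`, the
maps `φ₀(Δ,α) = (Δ, α + i_Δ B)` and `φ₁ = id` define a strict isomorphism of the
2-term L∞-algebras induced by the `L`-Courant algebroids `(𝔻L)_ω` and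
`(𝔻L)_{ω + d_{DL}B}`: `φ₀` is bijective, it is a chain map (`φ₀ ∘ l₁ = l₁' ∘ φ₁`),
it intertwines the skew brackets `l₂` (on two degree-0 and on mixed arguments),
and intertwines `l₃ = −T`. -/
theorem gauge_strict_isomorphism (DL : Type) [LieRing DL] (Ω : ℕ → Type)
    [∀ n, AddCommGroup (Ω n)] [∀ n, Module ℝ (Ω n)]
    (C : CartanCalculus DL Ω) (ω : Ω 3) (hω : C.d 3 ω = 0) (B : Ω 2) :
    Function.Bijective (gaugeMap C B) ∧
    (∀ s : Ω 0, gaugeMap C B ((0 : DL), C.d 0 s) = ((0 : DL), C.d 0 s)) ∧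
    (∀ e₁ e₂ : DL × Ω 1,
      gaugeMap C B (cjSkew C ω e₁ e₂)
        = cjSkew C (ω + C.d 2 B) (gaugeMap C B e₁) (gaugeMap C B e₂)) ∧
    (∀ (e : DL × Ω 1) (s : Ω 0),
      (2⁻¹ : ℝ) • C.ι (gaugeMap C B e).1 0 (C.d 0 s) = (2⁻¹ : ℝ) • C.ι e.1 0 (C.d 0 s)) ∧
    (∀ e₁ e₂ e₃ : DL × Ω 1,
      cjT C (ω + C.d 2 B) (gaugeMap C B e₁) (gaugeMap C B e₂) (gaugeMap C B e₃)
        = cjT C ω e₁ e₂ e₃) := by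
  refine ⟨?_, ?_, gauge_bracket C ω B, fun e s => rfl, ?_⟩
  · have hli : Function.LeftInverse (gaugeMap C (-B)) (gaugeMap C B) := by
      intro e; simp [gaugeMap, map_neg]
    have hri : Function.RightInverse (gaugeMap C (-B)) (gaugeMap C B) := by
      intro e; simp [gaugeMap, map_neg]
    exact ⟨hli.injective, hri.surjective⟩
  · intro s
    simp [gaugeMap, C.ι_zeroD 1 B]
  · intro e₁ e₂ e₃
    unfold cjT
    rw [← gauge_bracket C ω B e₁ e₂, ← gauge_bracket C ω B e₂ e₃,
      ← gauge_bracket C ω B e₃ e₁, gauge_pair, gauge_pair, gauge_pair]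
end

section
/- (Lemma 5.10) Let ω ∈ Ω³_cl(DL,L) be closed and nondegenerate. For Hamiltonian Atiyah 1-forms α, β, γ with (unique) Hamiltonian derivations Δ_α, Δ_β, Δ_γ (so d_{DL}α = i_{Δ_α}ω etc.), one has i_{[Δ_α,Δ_β]}γ + c.p. = 3 · i_{Δ_α} i_{Δ_β} i_{Δ_γ} ω + 2·( i_{Δ_α} d_{DL} B(β,γ) + c.p. ), where B(α,β) = (1/2)(i_{Δ_α}β − i_{Δ_β}α). -/
/-- Lemma 5.10: let `ω ∈ Ω³_cl(DL,L)` be closed and nondegenerate,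
and let `α, β, γ` be Hamiltonian Atiyah 1-forms with Hamiltonian derivations
`Δ_α, Δ_β, Δ_γ` (so `d_{DL}α = i_{Δ_α}ω`, etc.). Then
`i_{[Δ_α,Δ_β]}γ + c.p. = 3 i_{Δ_α}i_{Δ_β}i_{Δ_γ}ω + 2(i_{Δ_α} d_{DL} B(β,γ) + c.p.)`,
where `B(α,β) = ½(i_{Δ_α}β − i_{Δ_β}α)`. -/
theorem lemma_5_10 (DL : Type) [LieRing DL] (Ω : ℕ → Type)
    [∀ n, AddCommGroup (Ω n)] [∀ n, Module ℝ (Ω n)]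
    (C : CartanCalculus DL Ω) (ω : Ω 3) (hcl : C.d 3 ω = 0)
    (hnd : ∀ Δ : DL, C.ι Δ 2 ω = 0 → Δ = 0)
    (α β γ : Ω 1) (Δα Δβ Δγ : DL)
    (hα : C.d 1 α = C.ι Δα 2 ω) (hβ : C.d 1 β = C.ι Δβ 2 ω) (hγ : C.d 1 γ = C.ι Δγ 2 ω) :
    C.ι ⁅Δα, Δβ⁆ 0 γ + C.ι ⁅Δβ, Δγ⁆ 0 α + C.ι ⁅Δγ, Δα⁆ 0 β
      = (3 : ℝ) • C.ι Δα 0 (C.ι Δβ 1 (C.ι Δγ 2 ω))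
        + (2 : ℝ) • (C.ι Δα 0 (C.d 0 ((2⁻¹ : ℝ) • (C.ι Δβ 0 γ - C.ι Δγ 0 β)))
          + C.ι Δβ 0 (C.d 0 ((2⁻¹ : ℝ) • (C.ι Δγ 0 α - C.ι Δα 0 γ)))
          + C.ι Δγ 0 (C.d 0 ((2⁻¹ : ℝ) • (C.ι Δα 0 β - C.ι Δβ 0 α)))) := by
  have key : ∀ (X Y Z : DL) (δ : Ω 1), C.d 1 δ = C.ι Z 2 ω →
      C.ι ⁅X, Y⁆ 0 δ = C.ι X 0 (C.d 0 (C.ι Y 0 δ)) - C.ι Y 0 (C.d 0 (C.ι X 0 δ))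
        + C.ι X 0 (C.ι Y 1 (C.ι Z 2 ω)) := by
    intro X Y Z δ hδ
    rw [C.ι_bracket, C.lie_deg_zero, C.cartan, hδ, map_add, C.ι_ι]
    abel
  have perm1 : C.ι Δβ 0 (C.ι Δγ 1 (C.ι Δα 2 ω)) = C.ι Δα 0 (C.ι Δβ 1 (C.ι Δγ 2 ω)) := by
    rw [C.ι_ι Δγ Δα 1 ω, map_neg, C.ι_ι Δβ Δα 0, neg_neg]
  have perm2 : C.ι Δγ 0 (C.ι Δα 1 (C.ι Δβ 2 ω)) = C.ι Δα 0 (C.ι Δβ 1 (C.ι Δγ 2 ω)) := by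
    rw [C.ι_ι Δγ Δα 0, C.ι_ι Δγ Δβ 1 ω, map_neg, neg_neg]
  rw [key Δα Δβ Δγ γ hγ, key Δβ Δγ Δα α hα, key Δγ Δα Δβ β hβ, perm1, perm2]
  simp only [map_smul, map_sub, smul_sub, smul_add, smul_smul]
  module
end

section
/- (Theorem 5.11) Let ω ∈ Ω³_cl(DL,L) be closed and nondegenerate. Define φ₀(α) = (Δ_α, −α), φ₁(s) = −s, and φ₂(α,β) = −(1/2)(β(Δ_α) − α(Δ_β)). Then (φ₀, φ₁, φ₂) is an injective morphism of 2-term L∞-algebras from the algebra of observables (Γ(L) →^{d_{DL}} Ω¹_{Ham}(DL,L), l₂={·,·}, l₃(α,β,γ)=−i_{Δ_γ}i_{Δ_α}i_{Δ_β}ω) of Gr(ω) to the 2-term L∞-algebra (Γ(L) →^{d_{DL}} Γ(𝔻L)) of the ω-twisted L-Courant algebroid (𝔻L)_ω. -/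
section
variable {DL : Type} [LieRing DL] {Ω : ℕ → Type}
  [∀ n, AddCommGroup (Ω n)] [∀ n, Module ℝ (Ω n)]

/-- `{α,β} = i_{Δ_α} i_{Δ_β} ω`, the `l₂` of the algebra of observables of `Gr(ω)`. -/
def obsBr (C : CartanCalculus DL Ω) (ω : Ω 3) (Δα Δβ : DL) : Ω 1 :=
  C.ι Δα 1 (C.ι Δβ 2 ω)

/-- `φ₂(α,β) = −½(β(Δ_α) − α(Δ_β))`. -/
noncomputable def obsPhi2 (C : CartanCalculus DL Ω) (Δα Δβ : DL) (α β : Ω 1) : Ω 0 :=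
  -((2⁻¹ : ℝ) • (C.ι Δα 0 β - C.ι Δβ 0 α))

end

section Aux
variable {DL : Type} [LieRing DL] {Ω : ℕ → Type}
  [∀ n, AddCommGroup (Ω n)] [∀ n, Module ℝ (Ω n)]
  (C : CartanCalculus DL Ω) (ω : Ω 3)

lemma aux_ι_neg (Δ : DL) (n : ℕ) (x : Ω (n+1)) : C.ι (-Δ) n x = -C.ι Δ n x := by
  have h := C.ι_addD Δ (-Δ) n x
  rw [add_neg_cancel, C.ι_zeroD] at h
  exact eq_neg_of_add_eq_zero_right h.symm

lemma aux_triA (X Y Z : DL) :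
    C.ι X 0 (C.ι Y 1 (C.ι Z 2 ω)) = -C.ι Y 0 (C.ι X 1 (C.ι Z 2 ω)) :=
  C.ι_ι X Y 0 (C.ι Z 2 ω)

lemma aux_triB (X Y Z : DL) :
    C.ι X 0 (C.ι Y 1 (C.ι Z 2 ω)) = -C.ι X 0 (C.ι Z 1 (C.ι Y 2 ω)) := by
  rw [C.ι_ι Y Z 1 ω, map_neg]

lemma aux_triC (X Y Z : DL) :
    C.ι X 0 (C.ι Y 1 (C.ι Z 2 ω)) = C.ι Y 0 (C.ι Z 1 (C.ι X 2 ω)) := by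
  rw [aux_triA, aux_triB, neg_neg]

/-- The second component of `⟦φ₀α, φ₀β⟧_ω` for Hamiltonian `α, β`. -/
lemma aux_skew_ham (α β : Ω 1) (Δα Δβ : DL)
    (hα : C.d 1 α = C.ι Δα 2 ω) (hβ : C.d 1 β = C.ι Δβ 2 ω) :
    cjSkew C ω (Δα, -α) (Δβ, -β)
      = (⁅Δα, Δβ⁆, -(obsBr C ω Δα Δβ) + C.d 0 (obsPhi2 C Δα Δβ α β)) := by
  have cart1 : ∀ (Δ : DL) (x : Ω 1),
      C.lie Δ 1 x = C.ι Δ 1 (C.d 1 x) + C.d 0 (C.ι Δ 0 x) := fun Δ x => C.cartan Δ 0 x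
  unfold cjSkew obsBr obsPhi2
  refine Prod.ext rfl ?_
  simp only [map_neg, map_sub, map_smul, cart1, hα, hβ, C.ι_ι Δβ Δα 1 ω]
  module

lemma aux_bracket0 (X Y Δξ : DL) (ξ : Ω 1) (hξ : C.d 1 ξ = C.ι Δξ 2 ω) :
    C.ι ⁅X, Y⁆ 0 ξ
      = C.ι X 0 (C.d 0 (C.ι Y 0 ξ)) - C.ι Y 0 (C.ι X 1 (C.ι Δξ 2 ω))
        - C.ι Y 0 (C.d 0 (C.ι X 0 ξ)) := by
  have cart1 : C.lie X 1 ξ = C.ι X 1 (C.d 1 ξ) + C.d 0 (C.ι X 0 ξ) := C.cartan X 0 ξ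
  rw [C.ι_bracket, C.lie_deg_zero, cart1, hξ, map_add]
  abel

end Aux

/-- Theorem 5.11: for a closed nondegenerate `ω ∈ Ω³_cl(DL,L)`, the
maps `φ₀(α) = (Δ_α, −α)`, `φ₁(s) = −s`, `φ₂(α,β) = −½(β(Δ_α) − α(Δ_β))` define an
injective morphism of 2-term L∞-algebras from the algebra of observables
`(Γ(L) → Ω¹_Ham(DL,L), l₂ = {·,·}, l₃(α,β,γ) = −i_{Δ_γ}i_{Δ_α}i_{Δ_β}ω)` of
`Gr(ω)` to the 2-term L∞-algebra of `(𝔻L)_ω`: Hamiltonian derivations are unique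
(so `φ₀` is well defined and injective), `(φ₀,φ₁)` is a chain map, and the three
coherence conditions for a morphism of 2-term L∞-algebras hold. -/
theorem observables_inject_into_twisted_omni (DL : Type) [LieRing DL] (Ω : ℕ → Type)
    [∀ n, AddCommGroup (Ω n)] [∀ n, Module ℝ (Ω n)]
    (C : CartanCalculus DL Ω) (ω : Ω 3) (hcl : C.d 3 ω = 0)
    (hnd : ∀ Δ : DL, C.ι Δ 2 ω = 0 → Δ = 0) :
    -- uniqueness of Hamiltonian derivations: φ₀ is well defined and injective
    (∀ Δ Δ' : DL, C.ι Δ 2 ω = C.ι Δ' 2 ω → Δ = Δ') ∧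
    -- chain map condition `φ₀ ∘ l₁ = l₁' ∘ φ₁`
    (∀ (s : Ω 0) (Δ : DL), C.d 1 (C.d 0 s) = C.ι Δ 2 ω →
      ((Δ, -(C.d 0 s)) : DL × Ω 1) = ((0 : DL), C.d 0 (-s))) ∧
    -- `l₂'(φ₀α, φ₀β) − φ₀(l₂(α,β)) = l₁'(φ₂(α,β))`
    (∀ (α β : Ω 1) (Δα Δβ : DL),
      C.d 1 α = C.ι Δα 2 ω → C.d 1 β = C.ι Δβ 2 ω →
      cjSkew C ω (Δα, -α) (Δβ, -β) - ((⁅Δα, Δβ⁆, -(obsBr C ω Δα Δβ)) : DL × Ω 1)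
        = ((0 : DL), C.d 0 (obsPhi2 C Δα Δβ α β))) ∧
    -- `l₂'(φ₀α, φ₁s) − φ₁(l₂(α,s)) = φ₂(α, l₁ s)`
    (∀ (α : Ω 1) (Δα : DL), C.d 1 α = C.ι Δα 2 ω → ∀ s : Ω 0,
      (2⁻¹ : ℝ) • cjPair C (Δα, -α) ((0 : DL), C.d 0 (-s))
        = obsPhi2 C Δα (0 : DL) α (C.d 0 s)) ∧
    -- `l₃'(φ₀α,φ₀β,φ₀γ) − φ₁(l₃(α,β,γ)) = Σ φ₂(-, l₂(-,-)) + Σ l₂'(φ₀-, φ₂(-,-))`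
    (∀ (α β γ : Ω 1) (Δα Δβ Δγ : DL),
      C.d 1 α = C.ι Δα 2 ω → C.d 1 β = C.ι Δβ 2 ω → C.d 1 γ = C.ι Δγ 2 ω →
      - cjT C ω (Δα, -α) (Δβ, -β) (Δγ, -γ) - C.ι Δγ 0 (C.ι Δα 1 (C.ι Δβ 2 ω))
        = obsPhi2 C Δα ⁅Δβ, Δγ⁆ α (obsBr C ω Δβ Δγ)
          + obsPhi2 C Δβ ⁅Δγ, Δα⁆ β (obsBr C ω Δγ Δα)
          + obsPhi2 C Δγ ⁅Δα, Δβ⁆ γ (obsBr C ω Δα Δβ)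
          + (2⁻¹ : ℝ) • cjPair C (Δα, -α) ((0 : DL), C.d 0 (obsPhi2 C Δβ Δγ β γ))
          + (2⁻¹ : ℝ) • cjPair C (Δβ, -β) ((0 : DL), C.d 0 (obsPhi2 C Δγ Δα γ α))
          + (2⁻¹ : ℝ) • cjPair C (Δγ, -γ) ((0 : DL), C.d 0 (obsPhi2 C Δα Δβ α β))) := by
  refine ⟨?_, ?_, ?_, ?_, ?_⟩
  · -- injectivity
    intro Δ Δ' h
    have h0 : C.ι (Δ + -Δ') 2 ω = 0 := by
      rw [C.ι_addD, aux_ι_neg, h, add_neg_cancel]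
    have := hnd _ h0
    have : Δ = Δ' := by
      have h' := this
      rw [add_neg_eq_zero] at h'
      exact h'
    exact this
  · -- chain map
    intro s Δ hΔ
    have hΔ0 : Δ = 0 := hnd Δ (by rw [← hΔ, C.d_d])
    refine Prod.ext hΔ0 ?_
    simp [map_neg]
  · -- l₂ coherence
    intro α β Δα Δβ hα hβ
    rw [aux_skew_ham C ω α β Δα Δβ hα hβ]
    refine Prod.ext (by simp) ?_
    simp
  · -- l₂(e,s) coherence
    intro α Δα hα s
    simp only [cjPair, obsPhi2, C.ι_zeroD, map_neg]
    module
  · -- l₃ coherence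
    intro α β γ Δα Δβ Δγ hα hβ hγ
    have cart1 : ∀ (Δ : DL) (x : Ω 1),
        C.lie Δ 1 x = C.ι Δ 1 (C.d 1 x) + C.d 0 (C.ι Δ 0 x) := fun Δ x => C.cartan Δ 0 x
    -- triple-contraction normalizations; canonical atom is W = ι Δγ (ι Δα (ι Δβ ω))
    have h1 : C.ι Δα 0 (C.ι Δβ 1 (C.ι Δγ 2 ω))
        = C.ι Δγ 0 (C.ι Δα 1 (C.ι Δβ 2 ω)) := by
      rw [aux_triC, aux_triC]
    have h2 : C.ι Δβ 0 (C.ι Δγ 1 (C.ι Δα 2 ω))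
        = C.ι Δγ 0 (C.ι Δα 1 (C.ι Δβ 2 ω)) := by
      rw [aux_triC]
    have h3 : C.ι Δβ 0 (C.ι Δα 1 (C.ι Δγ 2 ω))
        = -C.ι Δγ 0 (C.ι Δα 1 (C.ι Δβ 2 ω)) := by
      rw [aux_triA, h1]
    have h4 : C.ι Δγ 0 (C.ι Δβ 1 (C.ι Δα 2 ω))
        = -C.ι Δγ 0 (C.ι Δα 1 (C.ι Δβ 2 ω)) := by
      rw [aux_triB]
    have h5 : C.ι Δα 0 (C.ι Δγ 1 (C.ι Δβ 2 ω))
        = -C.ι Δγ 0 (C.ι Δα 1 (C.ι Δβ 2 ω)) := by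
      rw [aux_triA]
    simp only [cjT,
      aux_skew_ham C ω α β Δα Δβ hα hβ,
      aux_skew_ham C ω β γ Δβ Δγ hβ hγ,
      aux_skew_ham C ω γ α Δγ Δα hγ hα,
      cjPair, obsBr, obsPhi2,
      aux_bracket0 C ω Δα Δβ Δγ γ hγ,
      aux_bracket0 C ω Δβ Δγ Δα α hα,
      aux_bracket0 C ω Δγ Δα Δβ β hβ,
      C.ι_zeroD, map_add, map_sub, map_neg, map_smul, smul_add, smul_sub, smul_neg,
      h1, h2, h3, h4, h5]
    module
end
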